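/- arXiv:1804.10984 — 5 statements merged into one kernel-verified Lean document; each statement's English description precedes it below -/
import Mathlib

section
/- For every integer N ≥ 1, the following five statements are equivalent: (a) B_N is a frame of H (for some bounds 0 < A ≤ B); (b) the set {p'_N(w_1), …, p'_N(w_N)} spans H'_N; (c) the set {p'_N(w_1), …, p'_N(w_N)} is linearly independent; (d) B_N is a Riesz sequence in H (for some bounds 0 < A ≤ B); (e) B_N is a Riesz basis of H. -/
open scoped BigOperators ComplexConjugate
open Submodule Filter

noncomputable section

local notation "⟪" x ", " y "⟫" => @inner ℂ _ _ x y

variable {H : Type*} [NormedAddCommGroup H] [InnerProductSpace ℂ H] [CompleteSpace H]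

/-- `u` is a frame of `H` with frame bounds `A ≤ B`. -/
def IsFrame (u : ℕ → H) (A B : ℝ) : Prop :=
  0 < A ∧ A ≤ B ∧ ∀ f : H,
    Summable (fun j => ‖⟪f, u j⟫‖ ^ 2) ∧
    A * ‖f‖ ^ 2 ≤ (∑' j, ‖⟪f, u j⟫‖ ^ 2) ∧ (∑' j, ‖⟪f, u j⟫‖ ^ 2) ≤ B * ‖f‖ ^ 2

/-- `u` is a Riesz sequence in `H` with bounds `A ≤ B`. -/
def IsRieszSeq (u : ℕ → H) (A B : ℝ) : Prop :=
  0 < A ∧ A ≤ B ∧ ∀ (s : Finset ℕ) (c : ℕ → ℂ),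
    A * ∑ j ∈ s, ‖c j‖ ^ 2 ≤ ‖∑ j ∈ s, c j • u j‖ ^ 2 ∧
    ‖∑ j ∈ s, c j • u j‖ ^ 2 ≤ B * ∑ j ∈ s, ‖c j‖ ^ 2

/-- A Riesz basis of `H` with frame constants `A ≤ B` is simultaneously a frame and a
Riesz sequence with those bounds. -/
def IsRieszBasis (u : ℕ → H) (A B : ℝ) : Prop := IsFrame u A B ∧ IsRieszSeq u A B

/-- Optimal frame constants of a Riesz basis: the largest `A` and the smallest `B`. -/
def OptimalRieszConstants (u : ℕ → H) (A B : ℝ) : Prop :=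
  IsRieszBasis u A B ∧ ∀ A' B' : ℝ, IsRieszBasis u A' B' → A' ≤ A ∧ B ≤ B'

/-- Optimal frame bounds of a frame: the largest `A` and the smallest `B`. -/
def OptimalFrameBounds (u : ℕ → H) (A B : ℝ) : Prop :=
  IsFrame u A B ∧ ∀ A' B' : ℝ, IsFrame u A' B' → A' ≤ A ∧ B ≤ B'

/-- The sequence `B_N`: the first `N` vectors of `v` are replaced by those of `w`. -/
def BNseq (w v : ℕ → H) (N : ℕ) : ℕ → H := fun j => if j < N then w j else v j

/-- The orthogonal projection `p'_N` onto `H'_N = span {v_0, …, v_{N-1}}`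
(for an orthonormal family `v`). -/
def pproj (v : ℕ → H) (N : ℕ) (u : H) : H := ∑ j ∈ Finset.range N, ⟪v j, u⟫ • v j

/-- The sequence `B̃_N`: the projections `p'_N (w_j)` for `j < N`, followed by the `v_j`. -/
def BtNseq (w v : ℕ → H) (N : ℕ) : ℕ → H := fun j => if j < N then pproj v N (w j) else v j

/-- The `N × N` matrix `U'_N` with (paper-convention) entries `⟨p'_N w_i, p'_N w_j⟩`;
here stated with Mathlib's inner product, conjugate-linear in the first slot. -/
def Umat' (v w : ℕ → H) (N : ℕ) : Matrix (Fin N) (Fin N) ℂ :=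
  Matrix.of fun i j => ⟪pproj v N (w (j : ℕ)), pproj v N (w (i : ℕ))⟫

/-- The `N × N` matrix `U''_N` with (paper-convention) entries `⟨p''_N w_i, p''_N w_j⟩`,
where `p''_N u = u - p'_N u`. -/
def Umat'' (v w : ℕ → H) (N : ℕ) : Matrix (Fin N) (Fin N) ℂ :=
  Matrix.of fun i j =>
    ⟪w (j : ℕ) - pproj v N (w (j : ℕ)), w (i : ℕ) - pproj v N (w (i : ℕ))⟫

/-- The quadratic form `⟨U c, c⟩ = ∑_{i,j} U_{i,j} c_i conj (c_j)` (real part). -/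
def quadForm {N : ℕ} (U : Matrix (Fin N) (Fin N) ℂ) (c : Fin N → ℂ) : ℝ :=
  (∑ i, ∑ j, U i j * c i * conj (c j)).re

/-- The matrix `M_N` with (paper-convention) entries `⟨w_j, v_k⟩`. -/
def Mmat (v w : ℕ → H) (N : ℕ) : Matrix (Fin N) (Fin N) ℂ :=
  Matrix.of fun j k => ⟪v (k : ℕ), w (j : ℕ)⟫

/-- The quantity `∑_{j ≤ N} |⟨f, w_j⟩|² + ∑_{j > N} |⟨f, v_j⟩|²`
(the squared norm of the analysis operator of `B_N` applied to `f`). -/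
def frameFun (v w : ℕ → H) (N : ℕ) (f : H) : ℝ :=
  (∑ j ∈ Finset.range N, ‖⟪f, w j⟫‖ ^ 2) + ∑' j : {j : ℕ // N ≤ j}, ‖⟪f, v (j : ℕ)⟫‖ ^ 2

/-- The quantity `∑_{j ≤ N} |⟨f, p'_N w_j⟩|² + ∑_{j > N} |⟨f, v_j⟩|²`
(the squared norm of the analysis operator of `B̃_N` applied to `f`). -/
def frameFunT (v w : ℕ → H) (N : ℕ) (f : H) : ℝ :=
  (∑ j ∈ Finset.range N, ‖⟪f, pproj v N (w j)⟫‖ ^ 2) +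
    ∑' j : {j : ℕ // N ≤ j}, ‖⟪f, v (j : ℕ)⟫‖ ^ 2

/-!
The operator `replaceOp w v N` sending each `v j` to the `j`-th vector of `B_N` is the identity on
`H''_N`, and `p'_N (replaceOp w v N x) = ∑_{i<N} ⟪v i, x⟫ p'_N w_i`. Hence it is injective when
the `p'_N w_i` are independent and surjective when they span `H'_N`; these two conditions are
equivalent by a dimension count, and an invertible operator carries an orthonormal basis to a
Riesz basis. Conversely, a vector of `H'_N` orthogonal to every `p'_N w_i` is orthogonal to all
of `B_N`, which a frame forbids; and a relation `∑ c_i p'_N w_i = 0` puts `∑ c_i w_i` in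
`H''_N`, the closed span of the other vectors of `B_N`, which contradicts the lower Riesz bound.
-/

section InnerProduct

variable {ι 𝕜 E : Type*} [RCLike 𝕜] [NormedAddCommGroup E] [InnerProductSpace 𝕜 E]

theorem HilbertBasis.hasSum_norm_inner_sq (b : HilbertBasis ι 𝕜 E) (x : E) :
    HasSum (fun i => ‖inner 𝕜 (b i) x‖ ^ 2) (‖x‖ ^ 2) := by
  have h := lp.hasSum_norm (p := 2) (by norm_num) (b.repr x)
  simpa [b.repr_apply_apply] using h

theorem HilbertBasis.mem_topologicalClosure_span_image (b : HilbertBasis ι 𝕜 E) {s : Set ι}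
    {x : E} (hx : ∀ i ∉ s, inner 𝕜 (b i) x = 0) :
    x ∈ (span 𝕜 (b '' s)).topologicalClosure := by
  refine (span 𝕜 (b '' s)).isClosed_topologicalClosure.mem_of_tendsto (b.hasSum_repr x)
    (Eventually.of_forall fun t => ?_)
  refine (span 𝕜 (b '' s)).le_topologicalClosure (sum_mem fun i _ => ?_)
  by_cases hi : i ∈ s
  · exact smul_mem _ _ (subset_span ⟨i, hi, rfl⟩)
  · simp [b.repr_apply_apply, hx i hi]

theorem inner_eq_zero_of_mem_span_image {u : ι → E} {s : Set ι} {x y : E}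
    (hx : x ∈ span 𝕜 (u '' s)) (hy : ∀ i ∈ s, inner 𝕜 (u i) y = 0) : inner 𝕜 x y = 0 := by
  have hle : span 𝕜 (u '' s) ≤ (𝕜 ∙ y)ᗮ := span_le.mpr <| Set.image_subset_iff.mpr fun i hi =>
    mem_orthogonal_singleton_iff_inner_left.mpr (hy i hi)
  exact mem_orthogonal_singleton_iff_inner_left.mp (hle hx)

theorem Orthonormal.norm_sum_smul_sq {v : ι → E} (hv : Orthonormal 𝕜 v) (s : Finset ι)
    (c : ι → 𝕜) : ‖∑ i ∈ s, c i • v i‖ ^ 2 = ∑ i ∈ s, ‖c i‖ ^ 2 := by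
  rw [← inner_self_eq_norm_sq (𝕜 := 𝕜), hv.inner_sum, map_sum]
  refine Finset.sum_congr rfl fun i _ => ?_
  rw [RCLike.conj_mul]
  norm_cast

end InnerProduct

theorem ContinuousLinearMap.sq_norm_bounds_of_leftInverse {𝕜 E F : Type*}
    [NontriviallyNormedField 𝕜] [SeminormedAddCommGroup E] [SeminormedAddCommGroup F]
    [NormedSpace 𝕜 E] [NormedSpace 𝕜 F] {S : F →L[𝕜] E} {T : E →L[𝕜] F}
    (h : Function.LeftInverse S T) (x : E) :
    ‖S‖⁻¹ ^ 2 * ‖x‖ ^ 2 ≤ ‖T x‖ ^ 2 ∧ ‖T x‖ ^ 2 ≤ ‖T‖ ^ 2 * ‖x‖ ^ 2 := by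
  have hlow : ‖S‖⁻¹ * ‖x‖ ≤ ‖T x‖ := by
    rcases (norm_nonneg S).eq_or_lt with hS | hS
    · simp [← hS]
    · rw [inv_mul_le_iff₀ hS]
      simpa [h x] using S.le_opNorm (T x)
  rw [← mul_pow, ← mul_pow]
  exact ⟨pow_le_pow_left₀ (by positivity) hlow 2,
    pow_le_pow_left₀ (norm_nonneg _) (T.le_opNorm x) 2⟩

theorem linearIndependent_fin_iff_sum_range {R M : Type*} [Ring R] [AddCommGroup M] [Module R M]
    {u : ℕ → M} {N : ℕ} :
    LinearIndependent R (fun j : Fin N => u j) ↔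
      ∀ c : ℕ → R, ∑ j ∈ Finset.range N, c j • u j = 0 → ∀ j < N, c j = 0 := by
  have h : LinearIndependent R (fun j : Fin N => u j) ↔ LinearIndepOn R u (Set.Iio N) :=
    linearIndependent_equiv (f := fun x : {j // j < N} => u x) Fin.equivSubtype
  simp only [h, ← Finset.coe_range, linearIndepOn_finset_iff, Finset.mem_range]

section Frames

variable {E : Type*} [NormedAddCommGroup E] [InnerProductSpace ℂ E]

theorem IsFrame.eq_zero_of_forall_inner_eq_zero {u : ℕ → E} {A B : ℝ} (hu : IsFrame u A B)
    {f : E} (hf : ∀ j, ⟪f, u j⟫ = 0) : f = 0 := by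
  obtain ⟨hA, -, hbounds⟩ := hu
  have hlow : A * ‖f‖ ^ 2 ≤ 0 := by simpa [hf] using (hbounds f).2.1
  simpa using nonpos_of_mul_nonpos_right hlow hA

theorem IsRieszSeq.mul_sum_le_norm_sub_sq {u : ℕ → E} {A B : ℝ} (hu : IsRieszSeq u A B)
    (s : Finset ℕ) (c : ℕ → ℂ) {y : E}
    (hy : y ∈ (span ℂ (u '' (↑s)ᶜ)).topologicalClosure) :
    A * ∑ j ∈ s, ‖c j‖ ^ 2 ≤ ‖∑ j ∈ s, c j • u j - y‖ ^ 2 := by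
  classical
  have hclosed : IsClosed {y : E | A * ∑ j ∈ s, ‖c j‖ ^ 2 ≤ ‖∑ j ∈ s, c j • u j - y‖ ^ 2} :=
    isClosed_le continuous_const (by fun_prop)
  rw [← SetLike.mem_coe, topologicalClosure_coe] at hy
  refine closure_minimal (fun y hy => ?_) hclosed hy
  obtain ⟨l, hl, rfl⟩ := (Finsupp.mem_span_image_iff_linearCombination ℂ).mp hy
  have hdisj : Disjoint s l.support :=
    Finset.disjoint_right.mpr fun j hj => by simpa using hl hj
  set e : ℕ → ℂ := fun j => if j ∈ s then c j else -l j
  have hsum : ∑ j ∈ s ∪ l.support, e j • u j = ∑ j ∈ s, c j • u j - l.sum fun j a => a • u j := by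
    rw [Finset.sum_union hdisj, Finsupp.sum, sub_eq_add_neg, ← Finset.sum_neg_distrib]
    congr 1
    · exact Finset.sum_congr rfl fun j hj => by simp [e, hj]
    · exact Finset.sum_congr rfl fun j hj => by
        simp [e, Finset.disjoint_right.mp hdisj hj, neg_smul]
  have hcoef : ∑ j ∈ s, ‖c j‖ ^ 2 ≤ ∑ j ∈ s ∪ l.support, ‖e j‖ ^ 2 := by
    rw [Finset.sum_union hdisj]
    refine le_add_of_le_of_nonneg (Finset.sum_le_sum fun j hj => by simp [e, hj]) ?_
    positivity
  simp only [Set.mem_ofPred_eq, Finsupp.linearCombination_apply, ← hsum]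
  exact (mul_le_mul_of_nonneg_left hcoef hu.1.le).trans (hu.2.2 _ e).1

theorem isRieszBasis_comp_hilbertBasis [CompleteSpace E] (b : HilbertBasis ℕ ℂ E) (T : E ≃L[ℂ] E) :
    IsRieszBasis (fun j => T (b j))
      (‖(T.symm : E →L[ℂ] E)‖⁻¹ ^ 2) (‖(T : E →L[ℂ] E)‖ ^ 2) := by
  set S : E →L[ℂ] E := ↑T.symm
  set L : E →L[ℂ] E := ↑T
  have hSL : Function.LeftInverse S L := T.symm_apply_apply
  have hbounds := ContinuousLinearMap.sq_norm_bounds_of_leftInverse hSL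
  have hA : 0 < ‖S‖⁻¹ ^ 2 := by
    have hS : S ≠ 0 := fun h0 => b.orthonormal.ne_zero 0 (by simpa [h0] using (hSL (b 0)).symm)
    positivity
  have hAB : ‖S‖⁻¹ ^ 2 ≤ ‖L‖ ^ 2 := by
    simpa [(b.orthonormal.1 0)] using (hbounds (b 0)).1.trans (hbounds (b 0)).2
  refine ⟨⟨hA, hAB, fun f => ?_⟩, ⟨hA, hAB, fun s c => ?_⟩⟩
  · have hadj : Function.LeftInverse S.adjoint L.adjoint := fun f => by
      rw [← ContinuousLinearMap.comp_apply, ← ContinuousLinearMap.adjoint_comp]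
      simp [S, L, ContinuousLinearMap.adjoint_id]
    have hsum : HasSum (fun j => ‖⟪f, T (b j)⟫‖ ^ 2) (‖L.adjoint f‖ ^ 2) := by
      convert b.hasSum_norm_inner_sq (L.adjoint f) using 2 with j
      rw [ContinuousLinearMap.adjoint_inner_right, norm_inner_symm]
      rfl
    rw [hsum.tsum_eq]
    have h := ContinuousLinearMap.sq_norm_bounds_of_leftInverse hadj f
    simp only [LinearIsometryEquiv.norm_map] at h
    exact ⟨hsum.summable, h⟩
  · have hx : ∑ j ∈ s, c j • T (b j) = L (∑ j ∈ s, c j • b j) := by simp [L]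
    rw [hx, ← b.orthonormal.norm_sum_smul_sq]
    exact hbounds _

end Frames

section Replacement

variable {E : Type*} [NormedAddCommGroup E] [InnerProductSpace ℂ E] {v w : ℕ → E} {N : ℕ}

def pprojL (v : ℕ → E) (N : ℕ) : E →L[ℂ] E :=
  ∑ j ∈ Finset.range N, (innerSL ℂ (v j)).smulRight (v j)

theorem pprojL_apply (u : E) : pprojL v N u = pproj v N u := by
  simp [pprojL, pproj]

theorem pproj_mem_span (u : E) : pproj v N u ∈ span ℂ (v '' Set.Iio N) :=
  sum_mem fun j hj => smul_mem _ _ (subset_span ⟨j, Finset.mem_range.mp hj, rfl⟩)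

theorem span_pproj_le :
    span ℂ ((fun j => pproj v N (w j)) '' Set.Iio N) ≤ span ℂ (v '' Set.Iio N) :=
  span_le.mpr <| Set.image_subset_iff.mpr fun _ _ => pproj_mem_span _

theorem pproj_apply_of_lt (hv : Orthonormal ℂ v) {k : ℕ} (hk : k < N) : pproj v N (v k) = v k := by
  simp [pproj, orthonormal_iff_ite.mp hv, hk]

theorem inner_pproj_of_lt (hv : Orthonormal ℂ v) {k : ℕ} (hk : k < N) (u : E) :
    ⟪v k, pproj v N u⟫ = ⟪v k, u⟫ := by
  simp [pproj, orthonormal_iff_ite.mp hv, hk]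

theorem inner_eq_zero_of_pproj_eq_zero (hv : Orthonormal ℂ v) {x : E} (hx : pproj v N x = 0)
    {k : ℕ} (hk : k < N) : ⟪v k, x⟫ = 0 := by
  rw [← inner_pproj_of_lt hv hk, hx, inner_zero_right]

theorem inner_pproj_of_mem (hv : Orthonormal ℂ v) {f : E} (hf : f ∈ span ℂ (v '' Set.Iio N))
    (u : E) : ⟪f, pproj v N u⟫ = ⟪f, u⟫ := by
  have h : ⟪f, u - pproj v N u⟫ = 0 := inner_eq_zero_of_mem_span_image hf fun k hk => by
    rw [inner_sub_right, inner_pproj_of_lt hv hk, sub_self]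
  rwa [inner_sub_right, sub_eq_zero, eq_comm] at h

def replaceOp (w v : ℕ → E) (N : ℕ) : E →L[ℂ] E :=
  ContinuousLinearMap.id ℂ E + ∑ i ∈ Finset.range N, (innerSL ℂ (v i)).smulRight (w i - v i)

theorem replaceOp_apply (x : E) :
    replaceOp w v N x = x + ∑ i ∈ Finset.range N, ⟪v i, x⟫ • (w i - v i) := by
  simp [replaceOp]

theorem replaceOp_apply_v (hv : Orthonormal ℂ v) (j : ℕ) :
    replaceOp w v N (v j) = BNseq w v N j := by
  by_cases hj : j < N <;> simp [replaceOp_apply, orthonormal_iff_ite.mp hv, BNseq, hj]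

theorem replaceOp_apply_of_forall_inner_eq_zero {x : E} (hx : ∀ i < N, ⟪v i, x⟫ = 0) :
    replaceOp w v N x = x := by
  rw [replaceOp_apply, add_eq_left]
  exact Finset.sum_eq_zero fun i hi => by rw [hx i (Finset.mem_range.mp hi), zero_smul]

theorem pproj_replaceOp (hv : Orthonormal ℂ v) (x : E) :
    pproj v N (replaceOp w v N x) = ∑ i ∈ Finset.range N, ⟪v i, x⟫ • pproj v N (w i) := by
  have hpv : ∀ i ∈ Finset.range N, pproj v N (v i) = v i := fun i hi =>
    pproj_apply_of_lt hv (Finset.mem_range.mp hi)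
  simp only [← pprojL_apply, replaceOp_apply, map_add, map_sum, map_smul, map_sub] at hpv ⊢
  rw [Finset.sum_congr rfl fun i hi => by rw [hpv i hi, smul_sub], Finset.sum_sub_distrib]
  simp [pprojL_apply, pproj]

end Replacement

section Equivalences

variable {E : Type*} [NormedAddCommGroup E] [InnerProductSpace ℂ E] {v w : ℕ → E} {N : ℕ}

theorem span_pproj_eq_iff_linearIndependent (hv : Orthonormal ℂ v) :
    span ℂ ((fun j => pproj v N (w j)) '' Set.Iio N) = span ℂ (v '' Set.Iio N) ↔
      LinearIndependent ℂ (fun j : Fin N => pproj v N (w j)) := by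
  have hrange : ∀ u : ℕ → E, Set.range (fun j : Fin N => u j) = u '' Set.Iio N := fun u => by
    rw [← Fin.range_val, ← Set.range_comp]
    rfl
  have hfinrank : Module.finrank ℂ (span ℂ (v '' Set.Iio N)) = N := by
    rw [← hrange]
    exact (finrank_span_eq_card (hv.linearIndependent.comp _ Fin.val_injective)).trans
      (Fintype.card_fin N)
  have : FiniteDimensional ℂ (span ℂ (v '' Set.Iio N)) :=
    .span_of_finite ℂ ((Set.finite_Iio N).image v)
  rw [linearIndependent_iff_card_eq_finrank_span, Fintype.card_fin, Set.finrank,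
    hrange (fun j => pproj v N (w j))]
  constructor
  · intro h
    rw [h, hfinrank]
  · intro h
    exact eq_of_le_of_finrank_eq span_pproj_le (h.symm.trans hfinrank.symm)

theorem span_pproj_eq_of_isFrame (hv : Orthonormal ℂ v) {A B : ℝ}
    (hF : IsFrame (BNseq w v N) A B) :
    span ℂ ((fun j => pproj v N (w j)) '' Set.Iio N) = span ℂ (v '' Set.Iio N) := by
  set K := span ℂ ((fun j => pproj v N (w j)) '' Set.Iio N)
  have : FiniteDimensional ℂ K := .span_of_finite ℂ ((Set.finite_Iio N).image _)
  have : CompleteSpace K := FiniteDimensional.complete ℂ K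
  have hperp : Kᗮ ⊓ span ℂ (v '' Set.Iio N) = ⊥ := by
    refine eq_bot_iff.mpr fun f hf => (mem_bot ℂ).mpr ?_
    obtain ⟨hfK, hf⟩ := mem_inf.mp hf
    refine hF.eq_zero_of_forall_inner_eq_zero fun j => ?_
    by_cases hj : j < N
    · rw [BNseq, if_pos hj, ← inner_pproj_of_mem hv hf]
      have hK : pproj v N (w j) ∈ K := subset_span ⟨j, hj, rfl⟩
      exact inner_left_of_mem_orthogonal hK hfK
    · rw [BNseq, if_neg hj]
      exact inner_eq_zero_of_mem_span_image hf fun k hk => hv.2 (hk.trans_le (not_lt.mp hj)).ne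
  rw [← sup_orthogonal_inf_of_hasOrthogonalProjection (K₁ := K) span_pproj_le, hperp, sup_bot_eq]

theorem linearIndependent_pproj_of_isRieszSeq (b : HilbertBasis ℕ ℂ E) {A B : ℝ}
    (hR : IsRieszSeq (BNseq w b N) A B) :
    LinearIndependent ℂ (fun j : Fin N => pproj b N (w j)) := by
  refine (linearIndependent_fin_iff_sum_range (u := fun j => pproj b N (w j))).mpr fun c hc => ?_
  set g := ∑ j ∈ Finset.range N, c j • w j
  have hg : ∀ k < N, ⟪b k, g⟫ = 0 := fun k hk =>
    inner_eq_zero_of_pproj_eq_zero b.orthonormal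
      (by simpa [g, ← pprojL_apply, map_sum, map_smul] using hc) hk
  have hgmem : g ∈ (span ℂ (BNseq w b N '' (↑(Finset.range N))ᶜ)).topologicalClosure := by
    have : BNseq w b N '' (↑(Finset.range N))ᶜ = b '' (↑(Finset.range N))ᶜ :=
      Set.image_congr fun j hj => by simp_all [BNseq]
    rw [this]
    exact b.mem_topologicalClosure_span_image fun k hk => hg k (by simpa using hk)
  have hsum : ∑ j ∈ Finset.range N, c j • BNseq w b N j = g :=
    Finset.sum_congr rfl fun j hj => by simp [BNseq, Finset.mem_range.mp hj]
  have h := hR.mul_sum_le_norm_sub_sq _ c hgmem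
  rw [hsum, sub_self, norm_zero, zero_pow two_ne_zero] at h
  have hzero : ∑ j ∈ Finset.range N, ‖c j‖ ^ 2 = 0 :=
    le_antisymm (nonpos_of_mul_nonpos_right h hR.1) (by positivity)
  intro j hj
  simpa using (Finset.sum_eq_zero_iff_of_nonneg (fun _ _ => by positivity)).mp hzero j
    (Finset.mem_range.mpr hj)

theorem replaceOp_injective (hv : Orthonormal ℂ v)
    (hli : LinearIndependent ℂ (fun j : Fin N => pproj v N (w j))) :
    Function.Injective (replaceOp w v N) := by
  refine (injective_iff_map_eq_zero _).mpr fun x hx => ?_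
  have hpx : ∑ i ∈ Finset.range N, ⟪v i, x⟫ • pproj v N (w i) = 0 := by
    rw [← pproj_replaceOp hv, hx]
    simp [pproj]
  have hcoef : ∀ i < N, ⟪v i, x⟫ = 0 :=
    linearIndependent_fin_iff_sum_range.mp hli (fun i => ⟪v i, x⟫) hpx
  rw [← hx, replaceOp_apply_of_forall_inner_eq_zero hcoef]

theorem replaceOp_surjective (hv : Orthonormal ℂ v)
    (hsp : span ℂ ((fun j => pproj v N (w j)) '' Set.Iio N) = span ℂ (v '' Set.Iio N)) :
    Function.Surjective (replaceOp w v N) := by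
  intro g
  obtain ⟨c, hc⟩ := (mem_span_image_finset_iff_exists_fun' ℂ).mp
    (by rw [Finset.coe_range, hsp]; exact pproj_mem_span g)
  set f := g - ∑ i ∈ Finset.range N, c i • w i + ∑ i ∈ Finset.range N, c i • v i
  have hcf : ∀ k < N, ⟪v k, f⟫ = c k := by
    intro k hk
    have h0 : ⟪v k, g - ∑ i ∈ Finset.range N, c i • w i⟫ = 0 :=
      inner_eq_zero_of_pproj_eq_zero hv
        (by simp only [← pprojL_apply, map_sub, map_sum, map_smul]; simp [pprojL_apply, hc]) hk
    rw [inner_add_right, h0, zero_add, inner_sum]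
    simp [inner_smul_right, orthonormal_iff_ite.mp hv, hk]
  refine ⟨f, ?_⟩
  rw [replaceOp_apply, Finset.sum_congr rfl fun i hi => by rw [hcf i (Finset.mem_range.mp hi)]]
  simp [f, smul_sub, Finset.sum_sub_distrib]

theorem exists_isRieszBasis_of_linearIndependent [CompleteSpace E] (b : HilbertBasis ℕ ℂ E)
    (hli : LinearIndependent ℂ (fun j : Fin N => pproj b N (w j))) :
    ∃ A B : ℝ, IsRieszBasis (BNseq w b N) A B := by
  have hsp := (span_pproj_eq_iff_linearIndependent b.orthonormal).mpr hli
  let T := ContinuousLinearEquiv.ofBijective (replaceOp w b N)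
    (LinearMap.ker_eq_bot.mpr (replaceOp_injective b.orthonormal hli))
    (LinearMap.range_eq_top.mpr (replaceOp_surjective b.orthonormal hsp))
  have hT : (fun j => T (b j)) = BNseq w b N := funext (replaceOp_apply_v b.orthonormal)
  exact ⟨_, _, hT ▸ isRieszBasis_comp_hilbertBasis b T⟩

end Equivalences

theorem statement0_general (v w : ℕ → H) (hv : Orthonormal ℂ v)
    (hv_top : (span ℂ (Set.range v)).topologicalClosure = ⊤)
    (N : ℕ) :
    List.TFAE [
      (∃ A B : ℝ, IsFrame (BNseq w v N) A B),
      span ℂ ((fun j => pproj v N (w j)) '' Set.Iio N) = span ℂ (v '' Set.Iio N),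
      LinearIndependent ℂ (fun j : Fin N => pproj v N (w (j : ℕ))),
      (∃ A B : ℝ, IsRieszSeq (BNseq w v N) A B),
      (∃ A B : ℝ, IsRieszBasis (BNseq w v N) A B)] := by
  obtain ⟨b, rfl⟩ : ∃ b : HilbertBasis ℕ ℂ H, ⇑b = v :=
    ⟨HilbertBasis.mk hv hv_top.ge, HilbertBasis.coe_mk hv _⟩
  tfae_have 1 → 2 := fun ⟨_, _, h⟩ => span_pproj_eq_of_isFrame hv h
  tfae_have 2 ↔ 3 := span_pproj_eq_iff_linearIndependent hv
  tfae_have 4 → 3 := fun ⟨_, _, h⟩ => linearIndependent_pproj_of_isRieszSeq b h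
  tfae_have 3 → 5 := exists_isRieszBasis_of_linearIndependent b
  tfae_have 5 → 1 := fun ⟨A, B, h⟩ => ⟨A, B, h.1⟩
  tfae_have 5 → 4 := fun ⟨A, B, h⟩ => ⟨A, B, h.2⟩
  tfae_finish

theorem statement0 (v w : ℕ → H) (hv : Orthonormal ℂ v)
    (hv_top : (span ℂ (Set.range v)).topologicalClosure = ⊤)
    (hw : ∀ j, ‖w j‖ = 1)
    (N : ℕ) (hN : 1 ≤ N) :
    List.TFAE [
      (∃ A B : ℝ, IsFrame (BNseq w v N) A B),
      span ℂ ((fun j => pproj v N (w j)) '' Set.Iio N) = span ℂ (v '' Set.Iio N),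
      LinearIndependent ℂ (fun j : Fin N => pproj v N (w (j : ℕ))),
      (∃ A B : ℝ, IsRieszSeq (BNseq w v N) A B),
      (∃ A B : ℝ, IsRieszBasis (BNseq w v N) A B)] :=
  statement0_general v w hv hv_top N

end
end

section
/- Fix N ≥ 1 and let Ĥ_N denote the span of {v_1, …, v_N, w_1, …, w_N}. Then B_N is a frame of H (for some bounds 0 < A ≤ B) if and only if for every f ∈ Ĥ_N with ‖f‖ = 1 one has Σ_{j=1}^N (|⟨f,w_j⟩|² − |⟨f,v_j⟩|²) + 1 > 0. Moreover, in that case the optimal frame bounds of B_N are the maximum and the minimum of the functional f ↦ Σ_{j=1}^N (|⟨f,w_j⟩|² − |⟨f,v_j⟩|²) + 1 over {f ∈ Ĥ_N : ‖f‖ = 1}. -/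
open scoped BigOperators ComplexConjugate
open Submodule Filter

noncomputable section

local notation "⟪" x ", " y "⟫" => @inner ℂ _ _ x y

variable {H : Type*} [NormedAddCommGroup H] [InnerProductSpace ℂ H] [CompleteSpace H]

/-!
By Parseval, `∑ⱼ |⟨f, B_N j⟩|² = ‖f‖² + Q f` with `Q f = ∑_{j<N} (|⟨f, w_j⟩|² - |⟨f, v_j⟩|²)`,
and `Q f = Q (p f)` for the projection `p f` of `f` onto the finite-dimensional space `Ĥ_N`.
On the compact unit sphere of `Ĥ_N` the functional `Q + 1` attains a minimum `A` and a
maximum `B`. Its trace over an orthonormal basis of `Ĥ_N` is `∑_{j<N} (‖w_j‖² - ‖v_j‖²) = 0`,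
so `A ≤ 1 ≤ B`. By homogeneity `(A - 1) ‖p f‖² ≤ Q (p f) ≤ (B - 1) ‖p f‖²`, and as
`‖p f‖ ≤ ‖f‖` this gives `A ‖f‖² ≤ ‖f‖² + Q f ≤ B ‖f‖²`. The extremal unit vectors show that
no better bounds exist.
-/

theorem HilbertBasis.hasSum_sq_norm_inner_left {ι 𝕜 E : Type*} [RCLike 𝕜] [NormedAddCommGroup E]
    [InnerProductSpace 𝕜 E] (b : HilbertBasis ι 𝕜 E) (x : E) :
    HasSum (fun i => ‖inner 𝕜 x (b i)‖ ^ 2) (‖x‖ ^ 2) := by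
  have h := lp.hasSum_norm (p := 2) (by norm_num) (b.repr x)
  simp only [ENNReal.toReal_ofNat, Real.rpow_two, b.repr_apply_apply,
    LinearIsometryEquiv.norm_map] at h
  simpa only [norm_inner_symm] using h

section FrameDefect

variable {E : Type*} [NormedAddCommGroup E] [InnerProductSpace ℂ E] (v w : ℕ → E) (N : ℕ)

def frameDefect (f : E) : ℝ :=
  ∑ j ∈ Finset.range N, (‖⟪f, w j⟫‖ ^ 2 - ‖⟪f, v j⟫‖ ^ 2)

theorem frameDefect_smul (c : ℂ) (f : E) :
    frameDefect v w N (c • f) = ‖c‖ ^ 2 * frameDefect v w N f := by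
  simp only [frameDefect, Finset.mul_sum, inner_smul_left, norm_mul, RCLike.norm_conj, mul_pow,
    mul_sub]

theorem continuous_frameDefect : Continuous (frameDefect v w N) := by
  unfold frameDefect
  fun_prop

theorem hasSum_sq_norm_inner_BNseq (b : HilbertBasis ℕ ℂ E) (f : E) :
    HasSum (fun j => ‖⟪f, BNseq w b N j⟫‖ ^ 2) (‖f‖ ^ 2 + frameDefect b w N f) := by
  have hdefect : HasSum (fun j => ‖⟪f, BNseq w b N j⟫‖ ^ 2 - ‖⟪f, b j⟫‖ ^ 2)
      (frameDefect b w N f) := by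
    have hzero : ∀ j ∉ Finset.range N, ‖⟪f, BNseq w b N j⟫‖ ^ 2 - ‖⟪f, b j⟫‖ ^ 2 = 0 :=
      fun j hj => by simp [BNseq, show ¬j < N by simpa using hj]
    have hsum : ∑ j ∈ Finset.range N, (‖⟪f, BNseq w b N j⟫‖ ^ 2 - ‖⟪f, b j⟫‖ ^ 2) =
        frameDefect b w N f :=
      Finset.sum_congr rfl fun j hj => by simp [BNseq, Finset.mem_range.mp hj]
    exact hsum ▸ hasSum_sum_of_ne_finset_zero hzero
  simpa using (b.hasSum_sq_norm_inner_left f).add hdefect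

theorem isFrame_BNseq_iff (b : HilbertBasis ℕ ℂ E) (A B : ℝ) :
    IsFrame (BNseq w b N) A B ↔ 0 < A ∧ A ≤ B ∧ ∀ f : E,
      A * ‖f‖ ^ 2 ≤ ‖f‖ ^ 2 + frameDefect b w N f ∧
        ‖f‖ ^ 2 + frameDefect b w N f ≤ B * ‖f‖ ^ 2 := by
  simp only [IsFrame, fun f => (hasSum_sq_norm_inner_BNseq w N b f).tsum_eq,
    fun f => (hasSum_sq_norm_inner_BNseq w N b f).summable, true_and]

theorem frameDefect_add_one_mem_Icc_of_isFrame {b : HilbertBasis ℕ ℂ E} {A B : ℝ}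
    (h : IsFrame (BNseq w b N) A B) {f : E} (hf : ‖f‖ = 1) :
    frameDefect b w N f + 1 ∈ Set.Icc A B := by
  obtain ⟨-, -, hbounds⟩ := (isFrame_BNseq_iff w N b A B).1 h
  obtain ⟨hlow, hup⟩ := hbounds f
  rw [hf] at hlow hup
  constructor <;> linarith

variable {v w N} {K : Submodule ℂ E}

theorem frameDefect_starProjection [K.HasOrthogonalProjection] (hvK : ∀ j < N, v j ∈ K)
    (hwK : ∀ j < N, w j ∈ K) (f : E) :
    frameDefect v w N (K.starProjection f) = frameDefect v w N f := by
  have hinner : ∀ u ∈ K, ⟪K.starProjection f, u⟫ = ⟪f, u⟫ := fun u hu => by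
    rw [inner_starProjection_left_eq_right, starProjection_eq_self_iff.mpr hu]
  refine Finset.sum_congr rfl fun j hj => ?_
  rw [Finset.mem_range] at hj
  rw [hinner _ (hvK j hj), hinner _ (hwK j hj)]

theorem sum_frameDefect_orthonormalBasis {ι : Type*} [Fintype ι] (b : OrthonormalBasis ι ℂ K)
    (hvK : ∀ j < N, v j ∈ K) (hwK : ∀ j < N, w j ∈ K) (hnorm : ∀ j < N, ‖w j‖ = ‖v j‖) :
    ∑ k, frameDefect v w N (b k) = 0 := by
  simp only [frameDefect]
  rw [Finset.sum_comm]
  refine Finset.sum_eq_zero fun j hj => ?_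
  rw [Finset.mem_range] at hj
  rw [Finset.sum_sub_distrib, sub_eq_zero]
  have hw := b.sum_sq_norm_inner_right ⟨w j, hwK j hj⟩
  have hv := b.sum_sq_norm_inner_right ⟨v j, hvK j hj⟩
  simp only [Submodule.coe_inner, Submodule.coe_norm] at hw hv
  rw [hw, hv, hnorm j hj]

theorem exists_frameDefect_nonpos [FiniteDimensional ℂ K] [Nontrivial K]
    (hvK : ∀ j < N, v j ∈ K) (hwK : ∀ j < N, w j ∈ K) (hnorm : ∀ j < N, ‖w j‖ = ‖v j‖) :
    ∃ u ∈ K, ‖u‖ = 1 ∧ frameDefect v w N u ≤ 0 := by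
  let b := stdOrthonormalBasis ℂ K
  have : Nonempty (Fin (Module.finrank ℂ K)) := ⟨⟨0, Module.finrank_pos⟩⟩
  obtain ⟨k, -, hk⟩ := Finset.exists_le_of_sum_le (g := fun _ => 0)
    (f := fun k => frameDefect v w N (b k)) Finset.univ_nonempty
    (by simpa using (sum_frameDefect_orthonormalBasis b hvK hwK hnorm).le)
  exact ⟨b k, (b k).2, b.orthonormal.1 k, hk⟩

theorem exists_frameDefect_nonneg [FiniteDimensional ℂ K] [Nontrivial K]
    (hvK : ∀ j < N, v j ∈ K) (hwK : ∀ j < N, w j ∈ K) (hnorm : ∀ j < N, ‖w j‖ = ‖v j‖) :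
    ∃ u ∈ K, ‖u‖ = 1 ∧ 0 ≤ frameDefect v w N u := by
  let b := stdOrthonormalBasis ℂ K
  have : Nonempty (Fin (Module.finrank ℂ K)) := ⟨⟨0, Module.finrank_pos⟩⟩
  obtain ⟨k, -, hk⟩ := Finset.exists_le_of_sum_le (f := fun _ => 0)
    (g := fun k => frameDefect v w N (b k)) Finset.univ_nonempty
    (by simpa using (sum_frameDefect_orthonormalBasis b hvK hwK hnorm).ge)
  exact ⟨b k, (b k).2, b.orthonormal.1 k, hk⟩

theorem mul_norm_sq_le_of_forall_norm_eq_one {q : E → ℝ}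
    (hq : ∀ (c : ℂ) f, q (c • f) = ‖c‖ ^ 2 * q f) [K.HasOrthogonalProjection]
    (hqK : ∀ f, q (K.starProjection f) = q f) {a : ℝ} (ha : a ≤ 0)
    (h : ∀ u ∈ K, ‖u‖ = 1 → a ≤ q u) (f : E) : a * ‖f‖ ^ 2 ≤ q f := by
  set g := K.starProjection f
  have hg : a * ‖g‖ ^ 2 ≤ q g := by
    rcases eq_or_ne g 0 with hg0 | hg0
    · simpa [hg0] using (hq 0 0).ge
    have hpos : 0 < ‖g‖ := norm_pos_iff.mpr hg0
    have hunit := h ((‖g‖⁻¹ : ℂ) • g) (K.smul_mem _ (K.starProjection_apply_mem f))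
      (by rw [norm_smul]; simp [hpos.ne'])
    rw [hq, ← Complex.ofReal_inv, Complex.norm_real, Real.norm_of_nonneg (by positivity),
      inv_pow, ← div_eq_inv_mul, le_div_iff₀ (by positivity)] at hunit
    exact hunit
  calc a * ‖f‖ ^ 2 ≤ a * ‖g‖ ^ 2 := mul_le_mul_of_nonpos_left
        (pow_le_pow_left₀ (norm_nonneg _) (K.norm_starProjection_apply_le f) 2) ha
    _ ≤ q g := hg
    _ = q f := hqK f

theorem nontrivial_of_mem_of_norm_eq_one {u : E} (huK : u ∈ K) (hu : ‖u‖ = 1) :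
    Nontrivial K :=
  nontrivial_of_ne ⟨u, huK⟩ 0 fun h => by
    rw [show u = 0 from congrArg Subtype.val h, norm_zero] at hu
    exact zero_ne_one hu

theorem mul_norm_sq_le_norm_sq_add_frameDefect [FiniteDimensional ℂ K] (hvK : ∀ j < N, v j ∈ K)
    (hwK : ∀ j < N, w j ∈ K) (hnorm : ∀ j < N, ‖w j‖ = ‖v j‖) {A : ℝ}
    (hA : IsLeast {x | ∃ f ∈ K, ‖f‖ = 1 ∧ x = frameDefect v w N f + 1} A) (f : E) :
    A * ‖f‖ ^ 2 ≤ ‖f‖ ^ 2 + frameDefect v w N f := by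
  obtain ⟨u₀, hu₀K, hu₀, -⟩ := hA.1
  have := nontrivial_of_mem_of_norm_eq_one hu₀K hu₀
  obtain ⟨u, huK, hu, hu_nonpos⟩ := exists_frameDefect_nonpos hvK hwK hnorm
  have hA1 : A ≤ 1 := by linarith [hA.2 ⟨u, huK, hu, rfl⟩]
  have := mul_norm_sq_le_of_forall_norm_eq_one (frameDefect_smul v w N)
    (frameDefect_starProjection hvK hwK) (a := A - 1) (by linarith)
    (fun u huK hu => by linarith [hA.2 ⟨u, huK, hu, rfl⟩]) f
  linarith

theorem norm_sq_add_frameDefect_le_mul [FiniteDimensional ℂ K] (hvK : ∀ j < N, v j ∈ K)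
    (hwK : ∀ j < N, w j ∈ K) (hnorm : ∀ j < N, ‖w j‖ = ‖v j‖) {B : ℝ}
    (hB : IsGreatest {x | ∃ f ∈ K, ‖f‖ = 1 ∧ x = frameDefect v w N f + 1} B) (f : E) :
    ‖f‖ ^ 2 + frameDefect v w N f ≤ B * ‖f‖ ^ 2 := by
  obtain ⟨u₀, hu₀K, hu₀, -⟩ := hB.1
  have := nontrivial_of_mem_of_norm_eq_one hu₀K hu₀
  obtain ⟨u, huK, hu, hu_nonneg⟩ := exists_frameDefect_nonneg hvK hwK hnorm
  have hB1 : 1 ≤ B := by linarith [hB.2 ⟨u, huK, hu, rfl⟩]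
  have := mul_norm_sq_le_of_forall_norm_eq_one (q := fun f => -frameDefect v w N f)
    (fun c f => by simp only [frameDefect_smul]; ring)
    (fun f => congrArg Neg.neg (frameDefect_starProjection hvK hwK f)) (a := 1 - B) (by linarith)
    (fun u huK hu => by linarith [hB.2 ⟨u, huK, hu, rfl⟩]) f
  linarith

theorem isCompact_setOf_norm_eq_one_and_eq [FiniteDimensional ℂ K] {φ : E → ℝ}
    (hφ : Continuous φ) : IsCompact {x | ∃ f ∈ K, ‖f‖ = 1 ∧ x = φ f} := by
  convert (isCompact_sphere (0 : K) 1).image (hφ.comp continuous_subtype_val) using 1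
  ext x
  simp [eq_comm, and_left_comm]

end FrameDefect

theorem statement3 (v w : ℕ → H) (hv : Orthonormal ℂ v)
    (hv_top : (span ℂ (Set.range v)).topologicalClosure = ⊤)
    (hw : ∀ j, ‖w j‖ = 1)
    (N : ℕ) (hN : 1 ≤ N) :
    ((∃ A B : ℝ, IsFrame (BNseq w v N) A B) ↔
      ∀ f ∈ span ℂ (v '' Set.Iio N ∪ w '' Set.Iio N), ‖f‖ = 1 →
        0 < (∑ j ∈ Finset.range N, (‖⟪f, w j⟫‖ ^ 2 - ‖⟪f, v j⟫‖ ^ 2)) + 1) ∧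
    ((∃ A B : ℝ, IsFrame (BNseq w v N) A B) →
      ∃ A B : ℝ, OptimalFrameBounds (BNseq w v N) A B ∧
        IsLeast {x : ℝ | ∃ f ∈ span ℂ (v '' Set.Iio N ∪ w '' Set.Iio N), ‖f‖ = 1 ∧
          x = (∑ j ∈ Finset.range N, (‖⟪f, w j⟫‖ ^ 2 - ‖⟪f, v j⟫‖ ^ 2)) + 1} A ∧
        IsGreatest {x : ℝ | ∃ f ∈ span ℂ (v '' Set.Iio N ∪ w '' Set.Iio N), ‖f‖ = 1 ∧
          x = (∑ j ∈ Finset.range N, (‖⟪f, w j⟫‖ ^ 2 - ‖⟪f, v j⟫‖ ^ 2)) + 1} B) := by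
  obtain ⟨b, rfl⟩ : ∃ b : HilbertBasis ℕ ℂ H, ⇑b = v :=
    ⟨HilbertBasis.mk hv hv_top.ge, HilbertBasis.coe_mk hv _⟩
  set K := span ℂ (b '' Set.Iio N ∪ w '' Set.Iio N)
  have : FiniteDimensional ℂ K := FiniteDimensional.span_of_finite ℂ
    (((Set.finite_Iio N).image _).union ((Set.finite_Iio N).image _))
  have hbK : ∀ j < N, b j ∈ K := fun j hj => subset_span (Or.inl ⟨j, hj, rfl⟩)
  have hwK : ∀ j < N, w j ∈ K := fun j hj => subset_span (Or.inr ⟨j, hj, rfl⟩)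
  have hnorm : ∀ j < N, ‖w j‖ = ‖b j‖ := fun j _ => by rw [hw, b.orthonormal.1]
  have hS := isCompact_setOf_norm_eq_one_and_eq (K := K)
    (φ := fun f => frameDefect b w N f + 1) ((continuous_frameDefect b w N).add continuous_const)
  have hSne : {x | ∃ f ∈ K, ‖f‖ = 1 ∧ x = frameDefect b w N f + 1}.Nonempty :=
    ⟨_, b 0, hbK 0 hN, b.orthonormal.1 0, rfl⟩
  obtain ⟨A, hA⟩ := hS.exists_isLeast hSne
  obtain ⟨B, hB⟩ := hS.exists_isGreatest hSne
  have isFrame_of_pos (hA0 : 0 < A) : IsFrame (BNseq w b N) A B :=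
    (isFrame_BNseq_iff w N b A B).2 ⟨hA0, hB.2 hA.1, fun f =>
      ⟨mul_norm_sq_le_norm_sq_add_frameDefect hbK hwK hnorm hA f,
        norm_sq_add_frameDefect_le_mul hbK hwK hnorm hB f⟩⟩
  have optimal (A' B' : ℝ) (h : IsFrame (BNseq w b N) A' B') : A' ≤ A ∧ B ≤ B' := by
    obtain ⟨f, -, hf, rfl⟩ := hA.1
    obtain ⟨g, -, hg, rfl⟩ := hB.1
    exact ⟨(frameDefect_add_one_mem_Icc_of_isFrame w N h hf).1,
      (frameDefect_add_one_mem_Icc_of_isFrame w N h hg).2⟩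
  have pos_of_isFrame : (∃ A' B', IsFrame (BNseq w b N) A' B') → 0 < A :=
    fun ⟨A', B', h⟩ => h.1.trans_le (optimal A' B' h).1
  refine ⟨⟨fun hframe f hfK hf => ?_, fun hpos => ⟨A, B, isFrame_of_pos ?_⟩⟩,
    fun hframe => ⟨A, B, ⟨isFrame_of_pos (pos_of_isFrame hframe), optimal⟩, hA, hB⟩⟩
  · exact (pos_of_isFrame hframe).trans_le (hA.2 ⟨f, hfK, hf, rfl⟩)
  · obtain ⟨f, hfK, hf, hAf⟩ := hA.1
    exact hAf ▸ hpos f hfK hf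

end
end

section
/- Assume that for every integer N ≥ 1 the sequence B_N is a Riesz basis of H, with optimal frame constants A_N ≤ B_N. If liminf_{N→∞} A_N > 0 and limsup_{N→∞} B_N < ∞, then the sequence (w_j)_{j≥1} is a Riesz basis of H, and its optimal frame constants A_∞ ≤ B_∞ satisfy A_∞ ≥ liminf_{N→∞} A_N and B_∞ ≤ limsup_{N→∞} B_N. -/
open scoped BigOperators ComplexConjugate
open Submodule Filter

noncomputable section

local notation "⟪" x ", " y "⟫" => @inner ℂ _ _ x y

variable {H : Type*} [NormedAddCommGroup H] [InnerProductSpace ℂ H] [CompleteSpace H]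

theorem exists_optimal_of_isRieszBasis {u : ℕ → H} {A₀ B₀ : ℝ}
    (h0 : IsRieszBasis u A₀ B₀) :
    ∃ Ai Bi : ℝ, OptimalRieszConstants u Ai Bi ∧ A₀ ≤ Ai ∧ Bi ≤ B₀ := by
  classical
  set SA : Set ℝ := {A' | ∃ B', IsRieszBasis u A' B'} with hSA
  set SB : Set ℝ := {B' | ∃ A', IsRieszBasis u A' B'} with hSB
  have hA₀ : A₀ ∈ SA := ⟨B₀, h0⟩
  have hB₀ : B₀ ∈ SB := ⟨A₀, h0⟩
  -- u 0 is nonzero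
  have hu0 : 0 < ‖u 0‖ ^ 2 := by
    have h := (h0.2.2.2 {0} (fun _ => 1)).1
    simp only [Finset.sum_singleton, norm_one, one_pow, mul_one, one_smul] at h
    exact lt_of_lt_of_le h0.2.1 h
  have key : ∀ A' ∈ SA, ∀ B' ∈ SB, A' ≤ B' := by
    rintro A' ⟨B₁, h1⟩ B' ⟨A₁, h2⟩
    have hl := (h1.1.2.2 (u 0)).2.1
    have hr := (h2.1.2.2 (u 0)).2.2
    exact le_of_mul_le_mul_right (hl.trans hr) hu0
  have hne : SA.Nonempty := ⟨A₀, hA₀⟩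
  have hneB : SB.Nonempty := ⟨B₀, hB₀⟩
  have hbddA : BddAbove SA := ⟨B₀, fun A' hA' => key A' hA' B₀ hB₀⟩
  have hbddB : BddBelow SB := ⟨A₀, fun B' hB' => key A₀ hA₀ B' hB'⟩
  set Ai := sSup SA with hAi
  set Bi := sInf SB with hBi
  have hA₀Ai : A₀ ≤ Ai := le_csSup hbddA hA₀
  have hBiB₀ : Bi ≤ B₀ := csInf_le hbddB hB₀
  have hAipos : 0 < Ai := lt_of_lt_of_le h0.1.1 hA₀Ai
  have hAiBi : Ai ≤ Bi :=
    csSup_le hne fun A' hA' => le_csInf hneB fun B' hB' => key A' hA' B' hB'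
  -- generic helpers
  have hsup : ∀ (r X : ℝ), 0 ≤ r → 0 ≤ X → (∀ A' ∈ SA, A' * r ≤ X) → Ai * r ≤ X := by
    intro r X hr hX h
    rcases hr.lt_or_eq with hr | hr
    · have : Ai ≤ X / r := csSup_le hne fun A' hA' => (le_div_iff₀ hr).mpr (h A' hA')
      exact (le_div_iff₀ hr).mp this
    · rw [← hr, mul_zero]; exact hX
  have hinf : ∀ (r X : ℝ), 0 ≤ r → 0 ≤ X → (∀ B' ∈ SB, X ≤ B' * r) → X ≤ Bi * r := by
    intro r X hr hX h
    rcases hr.lt_or_eq with hr | hr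
    · have : X / r ≤ Bi := le_csInf hneB fun B' hB' => (div_le_iff₀ hr).mpr (h B' hB')
      exact (div_le_iff₀ hr).mp this
    · rw [← hr, mul_zero]
      have := h B₀ hB₀
      rw [← hr, mul_zero] at this
      exact this
  refine ⟨Ai, Bi, ⟨⟨⟨hAipos, hAiBi, fun f => ?_⟩, hAipos, hAiBi, fun s c => ?_⟩,
    fun A' B' h' => ⟨le_csSup hbddA ⟨B', h'⟩, csInf_le hbddB ⟨A', h'⟩⟩⟩, hA₀Ai, hBiB₀⟩
  · refine ⟨(h0.1.2.2 f).1, ?_, ?_⟩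
    · refine hsup _ _ (by positivity) (tsum_nonneg fun j => by positivity) ?_
      rintro A' ⟨B', h'⟩
      exact (h'.1.2.2 f).2.1
    · refine hinf _ _ (by positivity) (tsum_nonneg fun j => by positivity) ?_
      rintro B' ⟨A', h'⟩
      exact (h'.1.2.2 f).2.2
  · constructor
    · refine hsup _ _ (Finset.sum_nonneg fun j _ => by positivity) (by positivity) ?_
      rintro A' ⟨B', h'⟩
      exact (h'.2.2.2 s c).1
    · refine hinf _ _ (Finset.sum_nonneg fun j _ => by positivity) (by positivity) ?_
      rintro B' ⟨A', h'⟩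
      exact (h'.2.2.2 s c).2

theorem statement8 (v w : ℕ → H) (hv : Orthonormal ℂ v)
    (hv_top : (span ℂ (Set.range v)).topologicalClosure = ⊤)
    (hw : ∀ j, ‖w j‖ = 1)
    (A B : ℕ → ℝ)
    (hopt : ∀ N : ℕ, 1 ≤ N → OptimalRieszConstants (BNseq w v N) (A N) (B N))
    (hA : 0 < liminf A atTop)
    (hB : IsBoundedUnder (· ≤ ·) atTop B) :
    ∃ Ainf Binf : ℝ, OptimalRieszConstants w Ainf Binf ∧
      liminf A atTop ≤ Ainf ∧ Binf ≤ limsup B atTop := by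

  classical
  set a := liminf A atTop with ha
  set b := limsup B atTop with hb
  obtain ⟨C, hC⟩ := hB
  rw [eventually_map] at hC
  have hB' : IsBoundedUnder (· ≤ ·) atTop B := ⟨C, by rwa [eventually_map]⟩
  have hN1 : ∀ᶠ N in atTop, 1 ≤ N := eventually_ge_atTop 1
  have hAB : ∀ᶠ N in atTop, A N ≤ B N := hN1.mono fun N hN => (hopt N hN).1.1.2.1
  have hA0 : ∀ᶠ N in atTop, 0 < A N := hN1.mono fun N hN => (hopt N hN).1.1.1
  have bddA_le : IsBoundedUnder (· ≤ ·) atTop A :=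
    isBoundedUnder_of_eventually_le (a := C)
      (by filter_upwards [hAB, hC] with N h1 h2; exact h1.trans h2)
  have bddA_ge : IsBoundedUnder (· ≥ ·) atTop A :=
    isBoundedUnder_of_eventually_ge (a := 0) (hA0.mono fun N h => h.le)
  have bddB_ge : IsBoundedUnder (· ≥ ·) atTop B :=
    isBoundedUnder_of_eventually_ge (a := 0)
      (by filter_upwards [hA0, hAB] with N h1 h2; exact (h1.trans_le h2).le)
  have hapos : 0 < a := hA
  have hab : a ≤ b := by
    calc a ≤ liminf B atTop :=
          liminf_le_liminf hAB bddA_ge hB'.isCoboundedUnder_ge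
      _ ≤ b := liminf_le_limsup hB' bddB_ge
  -- Frame property of w with constants a, b
  have hFrame : ∀ f : H, Summable (fun j => ‖⟪f, w j⟫‖ ^ 2) ∧
      a * ‖f‖ ^ 2 ≤ (∑' j, ‖⟪f, w j⟫‖ ^ 2) ∧ (∑' j, ‖⟪f, w j⟫‖ ^ 2) ≤ b * ‖f‖ ^ 2 := by
    intro f
    have sgv : Summable fun j => ‖⟪f, v j⟫‖ ^ 2 := by
      have h := hv.inner_products_summable (x := f)
      simpa [norm_inner_symm] using h
    have hTsplit : ∀ N, 1 ≤ N → (∑' j, ‖⟪f, BNseq w v N j⟫‖ ^ 2)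
        = (∑ j ∈ Finset.range N, ‖⟪f, w j⟫‖ ^ 2) + ∑' i, ‖⟪f, v (i + N)⟫‖ ^ 2 := by
      intro N hN
      have hsum := ((hopt N hN).1.1.2.2 f).1
      rw [← Summable.sum_add_tsum_nat_add N hsum]
      congr 1
      · exact Finset.sum_congr rfl fun j hj => by
          simp [BNseq, Finset.mem_range.mp hj]
      · exact tsum_congr fun i => by
          have : ¬ (i + N < N) := by omega
          simp [BNseq, this]
    -- summability of the w-series
    obtain ⟨N₀, hN₀⟩ := eventually_atTop.mp (hC.and hN1)
    have sg : Summable fun j => ‖⟪f, w j⟫‖ ^ 2 := by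
      apply summable_of_sum_range_le (c := C * ‖f‖ ^ 2) (fun n => by positivity)
      intro n
      set m := max n N₀ with hm
      obtain ⟨hBm, hm1⟩ := hN₀ m (le_max_right _ _)
      calc ∑ j ∈ Finset.range n, ‖⟪f, w j⟫‖ ^ 2
          ≤ ∑ j ∈ Finset.range m, ‖⟪f, w j⟫‖ ^ 2 := by
            apply Finset.sum_le_sum_of_subset_of_nonneg
            · exact Finset.range_subset_range.mpr (le_max_left _ _)
            · intro j _ _; positivity
        _ ≤ (∑ j ∈ Finset.range m, ‖⟪f, w j⟫‖ ^ 2) + ∑' i, ‖⟪f, v (i + m)⟫‖ ^ 2 :=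
            le_add_of_nonneg_right (tsum_nonneg fun i => by positivity)
        _ = ∑' j, ‖⟪f, BNseq w v m j⟫‖ ^ 2 := (hTsplit m hm1).symm
        _ ≤ B m * ‖f‖ ^ 2 := ((hopt m hm1).1.1.2.2 f).2.2
        _ ≤ C * ‖f‖ ^ 2 := mul_le_mul_of_nonneg_right hBm (by positivity)
    -- convergence of the frame sums
    have hTP : Tendsto (fun N => ∑ j ∈ Finset.range N, ‖⟪f, w j⟫‖ ^ 2) atTop
        (nhds (∑' j, ‖⟪f, w j⟫‖ ^ 2)) := sg.hasSum.tendsto_sum_nat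
    have hRt : Tendsto (fun N => ∑' i, ‖⟪f, v (i + N)⟫‖ ^ 2) atTop (nhds 0) :=
      tendsto_sum_nat_add fun j => ‖⟪f, v j⟫‖ ^ 2
    have hT : Tendsto (fun N => ∑' j, ‖⟪f, BNseq w v N j⟫‖ ^ 2) atTop
        (nhds (∑' j, ‖⟪f, w j⟫‖ ^ 2)) := by
      have h := hTP.add hRt
      rw [add_zero] at h
      refine h.congr' ?_
      filter_upwards [hN1] with N hN
      exact (hTsplit N hN).symm
    have hlow : ∀ᶠ N in atTop, A N * ‖f‖ ^ 2 ≤ ∑' j, ‖⟪f, BNseq w v N j⟫‖ ^ 2 :=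
      hN1.mono fun N hN => ((hopt N hN).1.1.2.2 f).2.1
    have hhigh : ∀ᶠ N in atTop, (∑' j, ‖⟪f, BNseq w v N j⟫‖ ^ 2) ≤ B N * ‖f‖ ^ 2 :=
      hN1.mono fun N hN => ((hopt N hN).1.1.2.2 f).2.2
    refine ⟨sg, ?_, ?_⟩
    · rcases (by positivity : (0:ℝ) ≤ ‖f‖ ^ 2).lt_or_eq with hr | hr
      · have hdiv : ∀ᶠ N in atTop,
            A N ≤ (∑' j, ‖⟪f, BNseq w v N j⟫‖ ^ 2) / ‖f‖ ^ 2 :=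
          hlow.mono fun N h => (le_div_iff₀ hr).mpr h
        have hlim : Tendsto (fun N => (∑' j, ‖⟪f, BNseq w v N j⟫‖ ^ 2) / ‖f‖ ^ 2) atTop
            (nhds ((∑' j, ‖⟪f, w j⟫‖ ^ 2) / ‖f‖ ^ 2)) := hT.div_const _
        have hle : a ≤ (∑' j, ‖⟪f, w j⟫‖ ^ 2) / ‖f‖ ^ 2 := by
          rw [ha, ← hlim.liminf_eq]
          exact liminf_le_liminf hdiv bddA_ge
            hlim.isBoundedUnder_le.isCoboundedUnder_ge
        exact (le_div_iff₀ hr).mp hle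
      · rw [← hr, mul_zero]
        exact tsum_nonneg fun j => by positivity
    · rcases (by positivity : (0:ℝ) ≤ ‖f‖ ^ 2).lt_or_eq with hr | hr
      · have hdiv : ∀ᶠ N in atTop,
            (∑' j, ‖⟪f, BNseq w v N j⟫‖ ^ 2) / ‖f‖ ^ 2 ≤ B N :=
          hhigh.mono fun N h => (div_le_iff₀ hr).mpr h
        have hlim : Tendsto (fun N => (∑' j, ‖⟪f, BNseq w v N j⟫‖ ^ 2) / ‖f‖ ^ 2) atTop
            (nhds ((∑' j, ‖⟪f, w j⟫‖ ^ 2) / ‖f‖ ^ 2)) := hT.div_const _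
        have hle : (∑' j, ‖⟪f, w j⟫‖ ^ 2) / ‖f‖ ^ 2 ≤ b := by
          rw [hb, ← hlim.limsup_eq]
          exact limsup_le_limsup hdiv
            hlim.isBoundedUnder_ge.isCoboundedUnder_le hB'
        exact (div_le_iff₀ hr).mp hle
      · have hf0 : f = 0 := by
          have : ‖f‖ = 0 := by
            have := hr.symm
            nlinarith [norm_nonneg f]
          exact norm_eq_zero.mp this
        subst hf0
        simp
  -- Riesz sequence property of w with constants a, b
  have hRiesz : ∀ (s : Finset ℕ) (c : ℕ → ℂ),
      a * ∑ j ∈ s, ‖c j‖ ^ 2 ≤ ‖∑ j ∈ s, c j • w j‖ ^ 2 ∧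
      ‖∑ j ∈ s, c j • w j‖ ^ 2 ≤ b * ∑ j ∈ s, ‖c j‖ ^ 2 := by
    intro s c
    have hSnn : (0:ℝ) ≤ ∑ j ∈ s, ‖c j‖ ^ 2 := Finset.sum_nonneg fun j _ => by positivity
    have hXnn : (0:ℝ) ≤ ‖∑ j ∈ s, c j • w j‖ ^ 2 := by positivity
    have hev : ∀ᶠ N in atTop, A N * (∑ j ∈ s, ‖c j‖ ^ 2) ≤ ‖∑ j ∈ s, c j • w j‖ ^ 2 ∧
        ‖∑ j ∈ s, c j • w j‖ ^ 2 ≤ B N * (∑ j ∈ s, ‖c j‖ ^ 2) := by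
      filter_upwards [eventually_ge_atTop ((s.sup id) + 1)] with N hN
      have h1 : 1 ≤ N := le_trans (Nat.le_add_left 1 _) hN
      have heq : ∑ j ∈ s, c j • BNseq w v N j = ∑ j ∈ s, c j • w j := by
        refine Finset.sum_congr rfl fun j hj => ?_
        have hjN : j < N := lt_of_le_of_lt (Finset.le_sup (f := id) hj) (by omega)
        simp [BNseq, hjN]
      have h := (hopt N h1).1.2.2.2 s c
      rwa [heq] at h
    rcases hSnn.lt_or_eq with hr | hr
    · constructor
      · have hdiv : ∀ᶠ N in atTop,
            A N ≤ (‖∑ j ∈ s, c j • w j‖ ^ 2) / (∑ j ∈ s, ‖c j‖ ^ 2) :=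
          hev.mono fun N h => (le_div_iff₀ hr).mpr h.1
        have hle : a ≤ (‖∑ j ∈ s, c j • w j‖ ^ 2) / (∑ j ∈ s, ‖c j‖ ^ 2) := by
          rw [ha, ← liminf_const (f := (atTop : Filter ℕ))
            ((‖∑ j ∈ s, c j • w j‖ ^ 2) / (∑ j ∈ s, ‖c j‖ ^ 2))]
          exact liminf_le_liminf hdiv bddA_ge
            isBoundedUnder_const.isCoboundedUnder_ge
        exact (le_div_iff₀ hr).mp hle
      · have hdiv : ∀ᶠ N in atTop,
            (‖∑ j ∈ s, c j • w j‖ ^ 2) / (∑ j ∈ s, ‖c j‖ ^ 2) ≤ B N :=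
          hev.mono fun N h => (div_le_iff₀ hr).mpr h.2
        have hle : (‖∑ j ∈ s, c j • w j‖ ^ 2) / (∑ j ∈ s, ‖c j‖ ^ 2) ≤ b := by
          rw [hb, ← limsup_const (f := (atTop : Filter ℕ))
            ((‖∑ j ∈ s, c j • w j‖ ^ 2) / (∑ j ∈ s, ‖c j‖ ^ 2))]
          exact limsup_le_limsup hdiv
            isBoundedUnder_const.isCoboundedUnder_le hB'
        exact (div_le_iff₀ hr).mp hle
    · obtain ⟨N, hN⟩ := hev.exists
      rw [← hr] at hN; simp only [mul_zero] at hN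
      have hX0 : ‖∑ j ∈ s, c j • w j‖ ^ 2 = 0 := le_antisymm hN.2 hXnn
      rw [← hr, hX0, mul_zero, mul_zero]
      exact ⟨le_refl 0, le_refl 0⟩
  have hbase : IsRieszBasis w a b := ⟨⟨hapos, hab, hFrame⟩, hapos, hab, hRiesz⟩
  exact exists_optimal_of_isRieszBasis hbase

end
end

section
/- Assume that for every integer N ≥ 1 the sequence B_N is a Riesz basis of H with optimal frame constants A_N ≤ B_N, and assume that the sequence (w_j)_{j≥1} is a Riesz basis of H with optimal frame constants A_∞ ≤ B_∞. Then A_∞ ≥ liminf_{N→∞} A_N and B_∞ ≤ limsup_{N→∞} B_N. -/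
open scoped BigOperators ComplexConjugate
open Submodule Filter Topology

noncomputable section

local notation "⟪" x ", " y "⟫" => @inner ℂ _ _ x y

variable {H : Type*} [NormedAddCommGroup H] [InnerProductSpace ℂ H] [CompleteSpace H]

open scoped Topology in
private lemma aux_dummy : True := trivial

/-- Tail Bessel bound for an orthonormal family. -/
lemma aux_tail_le (v : ℕ → H) (hv : Orthonormal ℂ v) (f : H) (N : ℕ) :
    ∑' i, ‖⟪f, v (i + N)⟫‖ ^ 2 ≤ ‖f‖ ^ 2 := by
  have hvN : Orthonormal ℂ (fun i : ℕ => v (i + N)) :=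
    hv.comp (· + N) (add_left_injective N)
  have h := hvN.tsum_inner_products_le f
  simpa [norm_inner_symm] using h

lemma aux_bessel_summable (v : ℕ → H) (hv : Orthonormal ℂ v) (f : H) :
    Summable (fun j => ‖⟪f, v j⟫‖ ^ 2) := by
  have h := hv.inner_products_summable (x := f)
  apply h.congr
  intro j
  rw [norm_inner_symm]

/-- Decomposition of the analysis-operator norm of `B_N`. -/
lemma aux_bnseq_tsum (v w : ℕ → H) (hv : Orthonormal ℂ v) (f : H) (N : ℕ) :
    Summable (fun j => ‖⟪f, BNseq w v N j⟫‖ ^ 2) ∧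
    ∑' j, ‖⟪f, BNseq w v N j⟫‖ ^ 2 =
      (∑ j ∈ Finset.range N, ‖⟪f, w j⟫‖ ^ 2) + ∑' i, ‖⟪f, v (i + N)⟫‖ ^ 2 := by
  have hb : Summable (fun j => ‖⟪f, v j⟫‖ ^ 2) := aux_bessel_summable v hv f
  have hshift : (fun i => ‖⟪f, BNseq w v N (i + N)⟫‖ ^ 2)
      = fun i => ‖⟪f, v (i + N)⟫‖ ^ 2 := by
    funext i
    simp [BNseq, Nat.not_lt.mpr (Nat.le_add_left N i)]
  have hg : Summable (fun j => ‖⟪f, BNseq w v N j⟫‖ ^ 2) := by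
    apply (summable_nat_add_iff (f := fun j => ‖⟪f, BNseq w v N j⟫‖ ^ 2) N).mp
    rw [hshift]
    exact (summable_nat_add_iff (f := fun j => ‖⟪f, v j⟫‖ ^ 2) N).mpr hb
  refine ⟨hg, ?_⟩
  have hdec := Summable.sum_add_tsum_nat_add N hg
  rw [← hdec]
  congr 1
  · exact Finset.sum_congr rfl fun j hj => by simp [BNseq, Finset.mem_range.mp hj]
  · exact congrArg tsum hshift

lemma aux_bnseq_tendsto (v w : ℕ → H) (hv : Orthonormal ℂ v) (f : H)
    (ha : Summable (fun j => ‖⟪f, w j⟫‖ ^ 2)) :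
    Tendsto (fun N => ∑' j, ‖⟪f, BNseq w v N j⟫‖ ^ 2) atTop
      (𝓝 (∑' j, ‖⟪f, w j⟫‖ ^ 2)) := by
  have hb : Summable (fun j => ‖⟪f, v j⟫‖ ^ 2) := aux_bessel_summable v hv f
  have h1 : Tendsto (fun N => ∑ j ∈ Finset.range N, ‖⟪f, w j⟫‖ ^ 2) atTop
      (𝓝 (∑' j, ‖⟪f, w j⟫‖ ^ 2)) := ha.hasSum.tendsto_sum_nat
  have h2 : Tendsto (fun N : ℕ => ∑' i, ‖⟪f, v (i + N)⟫‖ ^ 2) atTop (𝓝 0) :=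
    tendsto_sum_nat_add (fun j => ‖⟪f, v j⟫‖ ^ 2)
  have h3 := h1.add h2
  rw [add_zero] at h3
  apply h3.congr
  intro N
  exact ((aux_bnseq_tsum v w hv f N).2).symm

/-- Orthonormal sums: exact norm. -/
lemma aux_on_norm_sum (v : ℕ → H) (hv : Orthonormal ℂ v) (s : Finset ℕ) (c : ℕ → ℂ) :
    ‖∑ j ∈ s, c j • v j‖ ^ 2 = ∑ j ∈ s, ‖c j‖ ^ 2 := by
  have h := hv.inner_sum c c s
  have h2 : (‖∑ j ∈ s, c j • v j‖ : ℝ) ^ 2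
      = (⟪∑ j ∈ s, c j • v j, ∑ j ∈ s, c j • v j⟫ : ℂ).re := by
    rw [← inner_self_eq_norm_sq (𝕜 := ℂ)]
    rfl
  rw [h2, h, Complex.re_sum]
  refine Finset.sum_congr rfl fun j _ => ?_
  have : (starRingEnd ℂ) (c j) * c j = ((‖c j‖ : ℝ) : ℂ) ^ 2 := RCLike.conj_mul (c j)
  rw [this]
  norm_cast

/-- Upper Riesz bound for `B_N` with constant `2 * Binf`. -/
lemma aux_split_bound (v w : ℕ → H) (hv : Orthonormal ℂ v) (Binf : ℝ) (hB1 : 1 ≤ Binf)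
    (hupper : ∀ (s : Finset ℕ) (c : ℕ → ℂ),
      ‖∑ j ∈ s, c j • w j‖ ^ 2 ≤ Binf * ∑ j ∈ s, ‖c j‖ ^ 2)
    (N : ℕ) (s : Finset ℕ) (c : ℕ → ℂ) :
    ‖∑ j ∈ s, c j • BNseq w v N j‖ ^ 2 ≤ (2 * Binf) * ∑ j ∈ s, ‖c j‖ ^ 2 := by
  classical
  set s1 := s.filter (fun j => j < N) with hs1
  set s2 := s.filter (fun j => ¬ j < N) with hs2
  have hsplit : ∑ j ∈ s, c j • BNseq w v N j
      = (∑ j ∈ s1, c j • w j) + ∑ j ∈ s2, c j • v j := by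
    rw [← Finset.sum_filter_add_sum_filter_not s (fun j => j < N)]
    congr 1
    · exact Finset.sum_congr rfl fun j hj => by
        simp [BNseq, (Finset.mem_filter.mp hj).2]
    · exact Finset.sum_congr rfl fun j hj => by
        simp [BNseq, (Finset.mem_filter.mp hj).2]
  have h1 : ‖∑ j ∈ s1, c j • w j‖ ^ 2 ≤ Binf * ∑ j ∈ s1, ‖c j‖ ^ 2 := hupper s1 c
  have h2 : ‖∑ j ∈ s2, c j • v j‖ ^ 2 = ∑ j ∈ s2, ‖c j‖ ^ 2 := aux_on_norm_sum v hv s2 c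
  have hsum : (∑ j ∈ s1, ‖c j‖ ^ 2) + ∑ j ∈ s2, ‖c j‖ ^ 2 = ∑ j ∈ s, ‖c j‖ ^ 2 :=
    Finset.sum_filter_add_sum_filter_not s _ _
  have hnn1 : (0:ℝ) ≤ ∑ j ∈ s1, ‖c j‖ ^ 2 :=
    Finset.sum_nonneg fun j _ => by positivity
  have hnn2 : (0:ℝ) ≤ ∑ j ∈ s2, ‖c j‖ ^ 2 :=
    Finset.sum_nonneg fun j _ => by positivity
  have htri : ‖∑ j ∈ s, c j • BNseq w v N j‖
      ≤ ‖∑ j ∈ s1, c j • w j‖ + ‖∑ j ∈ s2, c j • v j‖ := by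
    rw [hsplit]; exact norm_add_le _ _
  have hsq : ‖∑ j ∈ s, c j • BNseq w v N j‖ ^ 2
      ≤ 2 * ‖∑ j ∈ s1, c j • w j‖ ^ 2 + 2 * ‖∑ j ∈ s2, c j • v j‖ ^ 2 := by
    nlinarith [norm_nonneg (∑ j ∈ s, c j • BNseq w v N j),
      norm_nonneg (∑ j ∈ s1, c j • w j), norm_nonneg (∑ j ∈ s2, c j • v j),
      sq_nonneg (‖∑ j ∈ s1, c j • w j‖ - ‖∑ j ∈ s2, c j • v j‖)]
  nlinarith [hsq, h1, h2, hsum, hnn1, hnn2, hB1]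


theorem statement9 (v w : ℕ → H) (hv : Orthonormal ℂ v)
    (hv_top : (span ℂ (Set.range v)).topologicalClosure = ⊤)
    (hw : ∀ j, ‖w j‖ = 1)
    (A B : ℕ → ℝ)
    (hopt : ∀ N : ℕ, 1 ≤ N → OptimalRieszConstants (BNseq w v N) (A N) (B N))
    (Ainf Binf : ℝ)
    (hW : OptimalRieszConstants w Ainf Binf) :
    liminf A atTop ≤ Ainf ∧ Binf ≤ limsup B atTop := by
  obtain ⟨hWB, hWopt⟩ := hW
  obtain ⟨hWf, hWr⟩ := hWB
  obtain ⟨hApos, hAleB, hWfr⟩ := hWf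
  obtain ⟨-, -, hWrz⟩ := hWr
  have ha : ∀ f : H, Summable (fun j => ‖⟪f, w j⟫‖ ^ 2) := fun f => (hWfr f).1
  have hB1 : 1 ≤ Binf := by
    have h := (hWrz {0} (fun _ => 1)).2
    simp [hw 0] at h
    linarith
  have hA1 : Ainf ≤ 1 := by
    have h := (hWrz {0} (fun _ => 1)).1
    simp [hw 0] at h
    linarith
  have hAN1 : ∀ N : ℕ, 1 ≤ N → A N ≤ 1 := by
    intro N hN
    have h := (((hopt N hN).1.2).2.2 {0} (fun _ => 1)).1
    have h0 : BNseq w v N 0 = w 0 := by simp only [BNseq]; rw [if_pos (Nat.lt_of_lt_of_le Nat.zero_lt_one hN)]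
    simp [h0, hw 0] at h
    linarith
  have hBN1 : ∀ N : ℕ, 1 ≤ N → 1 ≤ B N := by
    intro N hN
    have h := (((hopt N hN).1.2).2.2 {0} (fun _ => 1)).2
    have h0 : BNseq w v N 0 = w 0 := by simp only [BNseq]; rw [if_pos (Nat.lt_of_lt_of_le Nat.zero_lt_one hN)]
    simp [h0, hw 0] at h
    linarith
  have hBN2 : ∀ N : ℕ, 1 ≤ N → B N ≤ 2 * Binf := by
    intro N hN
    obtain ⟨hNb, hNopt⟩ := hopt N hN
    obtain ⟨hNf, hNr⟩ := hNb
    obtain ⟨hNApos, hNAB, hNfr⟩ := hNf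
    obtain ⟨-, -, hNrz⟩ := hNr
    refine (hNopt (A N) (2 * Binf) ⟨⟨hNApos, ?_, fun f => ⟨(hNfr f).1, (hNfr f).2.1, ?_⟩⟩,
      ⟨hNApos, ?_, fun s c => ⟨(hNrz s c).1, ?_⟩⟩⟩).2
    · have := hAN1 N hN; linarith
    · rw [(aux_bnseq_tsum v w hv f N).2]
      have h1 : ∑ j ∈ Finset.range N, ‖⟪f, w j⟫‖ ^ 2 ≤ Binf * ‖f‖ ^ 2 := by
        refine le_trans ?_ (hWfr f).2.2
        exact Summable.sum_le_tsum _ (fun j _ => by positivity) (ha f)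
      have h2 := aux_tail_le v hv f N
      nlinarith [sq_nonneg ‖f‖]
    · have := hAN1 N hN; linarith
    · exact aux_split_bound v w hv Binf hB1 (fun s c => (hWrz s c).2) N s c
  have hlim : ∀ f : H, Tendsto (fun N => ∑' j, ‖⟪f, BNseq w v N j⟫‖ ^ 2) atTop
      (𝓝 (∑' j, ‖⟪f, w j⟫‖ ^ 2)) := fun f => aux_bnseq_tendsto v w hv f (ha f)
  constructor
  · by_contra hcon
    push_neg at hcon
    have hbdd : IsBoundedUnder (· ≥ ·) atTop A := by
      refine ⟨0, eventually_map.mpr ?_⟩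
      filter_upwards [eventually_ge_atTop 1] with N hN
      exact le_of_lt (hopt N hN).1.1.1
    set a := (Ainf + liminf A atTop) / 2 with hadef
    have h1 : Ainf < a := by simp only [hadef]; linarith
    have h2 : a < liminf A atTop := by simp only [hadef]; linarith
    have hEv : ∀ᶠ N in atTop, 1 ≤ N ∧ a < A N :=
      (eventually_ge_atTop 1).and (eventually_lt_of_lt_liminf h2 hbdd)
    have hapos : 0 < a := lt_trans hApos h1
    have haB : a ≤ Binf := by
      obtain ⟨N, hN1, hNa⟩ := hEv.exists
      have := hAN1 N hN1
      linarith
    have hRB : IsRieszBasis w a Binf := by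
      refine ⟨⟨hapos, haB, fun f => ⟨ha f, ?_, (hWfr f).2.2⟩⟩,
        ⟨hapos, haB, fun s c => ⟨?_, (hWrz s c).2⟩⟩⟩
      · refine ge_of_tendsto (hlim f) ?_
        filter_upwards [hEv] with N hN
        have hfr := ((hopt N hN.1).1.1.2.2 f).2.1
        nlinarith [sq_nonneg ‖f‖, hN.2]
      · obtain ⟨N, hN⟩ := (hEv.and (eventually_ge_atTop (s.sup id + 1))).exists
        obtain ⟨⟨hN1, hNa⟩, hNs⟩ := hN
        have hsum : ∑ j ∈ s, c j • w j = ∑ j ∈ s, c j • BNseq w v N j :=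
          Finset.sum_congr rfl fun j hj => by
            have : j < N := lt_of_lt_of_le (Nat.lt_succ_of_le (Finset.le_sup (f := id) hj)) hNs
            simp [BNseq, this]
        have hfr := (((hopt N hN1).1.2).2.2 s c).1
        rw [hsum]
        have hnn : (0:ℝ) ≤ ∑ j ∈ s, ‖c j‖ ^ 2 :=
          Finset.sum_nonneg fun j _ => by positivity
        nlinarith
    have := (hWopt a Binf hRB).1
    linarith
  · by_contra hcon
    push_neg at hcon
    have hbdd : IsBoundedUnder (· ≤ ·) atTop B := by
      refine ⟨2 * Binf, eventually_map.mpr ?_⟩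
      filter_upwards [eventually_ge_atTop 1] with N hN
      exact hBN2 N hN
    set b := (limsup B atTop + Binf) / 2 with hbdef
    have h1 : limsup B atTop < b := by simp only [hbdef]; linarith
    have h2 : b < Binf := by simp only [hbdef]; linarith
    have hEv : ∀ᶠ N in atTop, 1 ≤ N ∧ B N < b :=
      (eventually_ge_atTop 1).and (eventually_lt_of_limsup_lt h1 hbdd)
    have hAb : Ainf ≤ b := by
      obtain ⟨N, hN1, hNb⟩ := hEv.exists
      have := hBN1 N hN1
      linarith
    have hRB : IsRieszBasis w Ainf b := by
      refine ⟨⟨hApos, hAb, fun f => ⟨ha f, (hWfr f).2.1, ?_⟩⟩,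
        ⟨hApos, hAb, fun s c => ⟨(hWrz s c).1, ?_⟩⟩⟩
      · refine le_of_tendsto (hlim f) ?_
        filter_upwards [hEv] with N hN
        have hfr := ((hopt N hN.1).1.1.2.2 f).2.2
        nlinarith [sq_nonneg ‖f‖, hN.2]
      · obtain ⟨N, hN⟩ := (hEv.and (eventually_ge_atTop (s.sup id + 1))).exists
        obtain ⟨⟨hN1, hNb⟩, hNs⟩ := hN
        have hsum : ∑ j ∈ s, c j • w j = ∑ j ∈ s, c j • BNseq w v N j :=
          Finset.sum_congr rfl fun j hj => by
            have : j < N := lt_of_lt_of_le (Nat.lt_succ_of_le (Finset.le_sup (f := id) hj)) hNs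
            simp [BNseq, this]
        have hfr := (((hopt N hN1).1.2).2.2 s c).2
        rw [hsum]
        have hnn : (0:ℝ) ≤ ∑ j ∈ s, ‖c j‖ ^ 2 :=
          Finset.sum_nonneg fun j _ => by positivity
        nlinarith
    have := (hWopt Ainf b hRB).2
    linarith


end
end

section
/- Fix N ≥ 1, assume that {p'_N(w_1), …, p'_N(w_N)} is a basis of H'_N, and let M_N be the N×N complex matrix with entries (M_N)_{j,k} = ⟨w_j, v_k⟩ for 1 ≤ j, k ≤ N. Then the optimal frame constants Ã_N ≤ B̃_N of B̃_N satisfy Ã_N = min_{c ∈ ℂ^N, |c| = 1} ‖M_N c‖² (the square of the smallest singular value of M_N) and B̃_N = max{ 1, max_{c ∈ ℂ^N, |c| = 1} ‖M_N c‖² } (the maximum of 1 and the square of the largest singular value of M_N). -/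
open scoped BigOperators ComplexConjugate
open Submodule Filter

noncomputable section

local notation "⟪" x ", " y "⟫" => @inner ℂ _ _ x y

variable {H : Type*} [NormedAddCommGroup H] [InnerProductSpace ℂ H] [CompleteSpace H]

/-! `M` is invertible because its rows are the coordinates of the basis `p'_N(w_j)` of `H'_N`.
The coefficients `a_k = ⟪f, v_k⟫` of `f` split into the block `k < N` and the tail `k ≥ N`.
On the tail `B̃_N` coincides with the orthonormal basis, so it contributes with constant `1`; on
the block, the analysis sum of `B̃_N` is `‖M a‖²` and a synthesis `∑ c_j p'_N(w_j)` has
coordinates `Mᵀ c` in `v_0, …, v_{N-1}`. Hence the optimal bounds are the extreme values of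
`‖M c‖²` and `‖Mᵀ c‖²` on the unit sphere (the same for `M` and `Mᵀ`: both are `‖M⁻¹‖⁻²` and
`‖M‖²` in the `L²` operator norm), capped by `1`. The lower cap is never active because
`‖M⁻¹‖⁻² ≤ ‖p'_N(w_0)‖² ≤ ‖w_0‖² = 1`. -/

open Finset Matrix
open scoped Matrix.Norms.L2Operator

namespace Matrix

variable {𝕜 m n : Type*} [RCLike 𝕜] [Fintype m] [Fintype n]

def sqNormValues (A : Matrix m n 𝕜) : Set ℝ :=
  {x | ∃ c : n → 𝕜, ∑ i, ‖c i‖ ^ 2 = 1 ∧ x = ∑ i, ‖(A *ᵥ c) i‖ ^ 2}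

lemma sum_norm_sq_smul (t : 𝕜) (c : n → 𝕜) :
    ∑ i, ‖(t • c) i‖ ^ 2 = ‖t‖ ^ 2 * ∑ i, ‖c i‖ ^ 2 := by
  simp only [Pi.smul_apply, smul_eq_mul, norm_mul, mul_pow, mul_sum]

lemma sum_norm_sq_star (c : n → 𝕜) : ∑ i, ‖star c i‖ ^ 2 = ∑ i, ‖c i‖ ^ 2 := by
  simp only [Pi.star_apply, norm_star]

lemma sum_norm_sq_transpose_mulVec (A : Matrix m n 𝕜) (c : m → 𝕜) :
    ∑ i, ‖(Aᵀ *ᵥ c) i‖ ^ 2 = ∑ i, ‖(Aᴴ *ᵥ star c) i‖ ^ 2 := by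
  rw [← sum_norm_sq_star (Aᴴ *ᵥ star c), star_mulVec, star_star, conjTranspose_conjTranspose,
    mulVec_transpose]

lemma sqNormValues_transpose (A : Matrix m n 𝕜) : sqNormValues Aᵀ = sqNormValues Aᴴ := by
  ext x
  constructor
  · rintro ⟨c, hc, rfl⟩
    exact ⟨star c, by rwa [sum_norm_sq_star], sum_norm_sq_transpose_mulVec A c⟩
  · rintro ⟨c, hc, rfl⟩
    refine ⟨star c, by rwa [sum_norm_sq_star], ?_⟩
    rw [sum_norm_sq_transpose_mulVec, star_star]

section NormBounds

variable [DecidableEq n]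

lemma sum_norm_sq_mulVec_le (A : Matrix m n 𝕜) (c : n → 𝕜) :
    ∑ i, ‖(A *ᵥ c) i‖ ^ 2 ≤ ‖A‖ ^ 2 * ∑ j, ‖c j‖ ^ 2 := by
  have h := pow_le_pow_left₀ (norm_nonneg _) (A.l2_opNorm_mulVec (WithLp.toLp 2 c)) 2
  rwa [mul_pow, EuclideanSpace.norm_sq_eq, EuclideanSpace.norm_sq_eq] at h

lemma exists_sum_norm_sq_mulVec_eq [Nonempty n] (A : Matrix m n 𝕜) :
    ∃ c : n → 𝕜, ∑ i, ‖c i‖ ^ 2 = 1 ∧ ∑ i, ‖(A *ᵥ c) i‖ ^ 2 = ‖A‖ ^ 2 := by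
  let T := (toEuclideanLin (𝕜 := 𝕜) (m := m) (n := n)).trans LinearMap.toContinuousLinearMap A
  have hcpt : IsCompact ((fun x => ‖T x‖) '' Metric.sphere 0 1) :=
    (isCompact_sphere 0 1).image (by fun_prop)
  obtain ⟨x, hx, hTx⟩ := hcpt.sSup_mem ((NormedSpace.sphere_nonempty.2 zero_le_one).image _)
  rw [T.sSup_sphere_eq_norm, ← l2_opNorm_def] at hTx
  have hx1 := EuclideanSpace.norm_sq_eq x
  have hTx2 := EuclideanSpace.norm_sq_eq (T x)
  rw [mem_sphere_zero_iff_norm.1 hx, one_pow] at hx1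
  rw [show ‖T x‖ = ‖A‖ from hTx] at hTx2
  exact ⟨x.ofLp, hx1.symm, hTx2.symm⟩

lemma isGreatest_sqNormValues [Nonempty n] (A : Matrix m n 𝕜) :
    IsGreatest (sqNormValues A) (‖A‖ ^ 2) := by
  obtain ⟨c, hc, hAc⟩ := exists_sum_norm_sq_mulVec_eq A
  refine ⟨⟨c, hc, hAc.symm⟩, ?_⟩
  rintro _ ⟨c, hc, rfl⟩
  simpa [hc] using sum_norm_sq_mulVec_le A c

variable {A : Matrix n n 𝕜}

lemma inv_norm_inv_sq_mul_le_sum_norm_sq_mulVec (hA : IsUnit A) (c : n → 𝕜) :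
    (‖A⁻¹‖ ^ 2)⁻¹ * ∑ i, ‖c i‖ ^ 2 ≤ ∑ i, ‖(A *ᵥ c) i‖ ^ 2 := by
  rcases (norm_nonneg A⁻¹).eq_or_lt with h | h
  · simpa [← h] using sum_nonneg fun i _ => sq_nonneg ‖(A *ᵥ c) i‖
  rw [inv_mul_le_iff₀ (by positivity)]
  simpa [mulVec_mulVec, nonsing_inv_mul A ((isUnit_iff_isUnit_det A).1 hA)]
    using sum_norm_sq_mulVec_le A⁻¹ (A *ᵥ c)

lemma isLeast_sqNormValues [Nonempty n] (hA : IsUnit A) :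
    IsLeast (sqNormValues A) (‖A⁻¹‖ ^ 2)⁻¹ := by
  refine ⟨?_, ?_⟩
  · obtain ⟨c, hc, hAc⟩ := exists_sum_norm_sq_mulVec_eq A⁻¹
    have hpos : 0 < ‖A⁻¹‖ := norm_pos_iff.2 (isUnit_nonsing_inv_iff.2 hA).ne_zero
    refine ⟨(‖A⁻¹‖⁻¹ : 𝕜) • A⁻¹ *ᵥ c, ?_, ?_⟩
    · rw [sum_norm_sq_smul, hAc, norm_inv, RCLike.norm_ofReal, abs_norm, inv_pow,
        inv_mul_cancel₀ (by positivity)]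
    · rw [mulVec_smul, mulVec_mulVec, mul_nonsing_inv A ((isUnit_iff_isUnit_det A).1 hA),
        one_mulVec, sum_norm_sq_smul, hc, mul_one, norm_inv, RCLike.norm_ofReal, abs_norm, inv_pow]
  · rintro _ ⟨c, hc, rfl⟩
    simpa [hc] using inv_norm_inv_sq_mul_le_sum_norm_sq_mulVec hA c

end NormBounds

variable [DecidableEq m] [DecidableEq n]

lemma sum_norm_sq_transpose_mulVec_le (A : Matrix m n 𝕜) (c : m → 𝕜) :
    ∑ i, ‖(Aᵀ *ᵥ c) i‖ ^ 2 ≤ ‖A‖ ^ 2 * ∑ i, ‖c i‖ ^ 2 := by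
  rw [sum_norm_sq_transpose_mulVec, ← sum_norm_sq_star c, ← l2_opNorm_conjTranspose]
  exact sum_norm_sq_mulVec_le _ _

lemma isGreatest_sqNormValues_transpose [Nonempty m] (A : Matrix m n 𝕜) :
    IsGreatest (sqNormValues Aᵀ) (‖A‖ ^ 2) := by
  rw [sqNormValues_transpose, ← l2_opNorm_conjTranspose]
  exact isGreatest_sqNormValues _

variable {A : Matrix m m 𝕜}

lemma inv_norm_inv_sq_mul_le_sum_norm_sq_transpose_mulVec (hA : IsUnit A) (c : m → 𝕜) :
    (‖A⁻¹‖ ^ 2)⁻¹ * ∑ i, ‖c i‖ ^ 2 ≤ ∑ i, ‖(Aᵀ *ᵥ c) i‖ ^ 2 := by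
  rw [sum_norm_sq_transpose_mulVec, ← sum_norm_sq_star c, ← l2_opNorm_conjTranspose A⁻¹,
    conjTranspose_nonsing_inv]
  exact inv_norm_inv_sq_mul_le_sum_norm_sq_mulVec hA.star _

lemma isLeast_sqNormValues_transpose [Nonempty m] (hA : IsUnit A) :
    IsLeast (sqNormValues Aᵀ) (‖A⁻¹‖ ^ 2)⁻¹ := by
  rw [sqNormValues_transpose, ← l2_opNorm_conjTranspose A⁻¹, conjTranspose_nonsing_inv]
  exact isLeast_sqNormValues hA.star

end Matrix

section

variable {𝕜 ι E : Type*} [RCLike 𝕜] [NormedAddCommGroup E] [InnerProductSpace 𝕜 E]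

lemma HilbertBasis.hasSum_norm_sq_inner (b : HilbertBasis ι 𝕜 E) (x : E) :
    HasSum (fun i => ‖inner 𝕜 x (b i)‖ ^ 2) (‖x‖ ^ 2) := by
  have h := lp.hasSum_norm (p := 2) (by norm_num) (b.repr x)
  simp only [ENNReal.toReal_ofNat, Real.rpow_two, b.repr_apply_apply,
    LinearIsometryEquiv.norm_map] at h
  simpa only [norm_inner_symm] using h

lemma Orthonormal.norm_sq_sum_smul {v : ι → E} (hv : Orthonormal 𝕜 v) (s : Finset ι)
    (l : ι → 𝕜) : ‖∑ i ∈ s, l i • v i‖ ^ 2 = ∑ i ∈ s, ‖l i‖ ^ 2 := by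
  simpa using hv.orthogonalFamily.norm_sum l s

end

lemma Finset.sum_eq_sum_range_ite_add_sum_filter_le {M : Type*} [AddCommMonoid M]
    (s : Finset ℕ) (N : ℕ) (g : ℕ → M) :
    ∑ j ∈ s, g j = ∑ j ∈ range N, (if j ∈ s then g j else 0) + ∑ j ∈ s with N ≤ j, g j := by
  rw [sum_ite_mem, ← sum_filter_add_sum_filter_not s (· < N)]
  congr 2
  · ext j; simp [and_comm]
  · ext j; simp

section Frames

variable {E : Type*} [NormedAddCommGroup E] [InnerProductSpace ℂ E] {u : ℕ → E} {N : ℕ}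
  {A B : ℝ}

lemma HilbertBasis.hasSum_norm_sq_inner_of_tail_eq (b : HilbertBasis ℕ ℂ E)
    (hu : ∀ j, N ≤ j → u j = b j) (f : E) :
    HasSum (fun j => ‖⟪f, u j⟫‖ ^ 2)
      (∑ j ∈ range N, ‖⟪f, u j⟫‖ ^ 2 + (‖f‖ ^ 2 - ∑ j ∈ range N, ‖⟪f, b j⟫‖ ^ 2)) := by
  have hdiff : HasSum (fun j => ‖⟪f, u j⟫‖ ^ 2 - ‖⟪f, b j⟫‖ ^ 2)
      (∑ j ∈ range N, (‖⟪f, u j⟫‖ ^ 2 - ‖⟪f, b j⟫‖ ^ 2)) :=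
    hasSum_sum_of_ne_finset_zero fun j hj => by
      rw [hu j (by simpa using hj), sub_self]
  convert hdiff.add (b.hasSum_norm_sq_inner f) using 1
  · simp
  · rw [sum_sub_distrib]; ring

lemma HilbertBasis.isFrame_of_tail_eq (b : HilbertBasis ℕ ℂ E) (hu : ∀ j, N ≤ j → u j = b j)
    (hA : 0 < A) (hA1 : A ≤ 1) (hB1 : 1 ≤ B)
    (hlow : ∀ f, A * ∑ j ∈ range N, ‖⟪f, b j⟫‖ ^ 2 ≤ ∑ j ∈ range N, ‖⟪f, u j⟫‖ ^ 2)
    (hup : ∀ f, ∑ j ∈ range N, ‖⟪f, u j⟫‖ ^ 2 ≤ B * ∑ j ∈ range N, ‖⟪f, b j⟫‖ ^ 2) :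
    IsFrame u A B := by
  refine ⟨hA, hA1.trans hB1, fun f => ?_⟩
  have hsum := b.hasSum_norm_sq_inner_of_tail_eq hu f
  have hbessel : ∑ j ∈ range N, ‖⟪f, b j⟫‖ ^ 2 ≤ ‖f‖ ^ 2 :=
    sum_le_hasSum _ (fun _ _ => by positivity) (b.hasSum_norm_sq_inner f)
  have htail := mul_nonneg (sub_nonneg.2 hA1) (sub_nonneg.2 hbessel)
  have htail' := mul_nonneg (sub_nonneg.2 hB1) (sub_nonneg.2 hbessel)
  refine ⟨hsum.summable, ?_, ?_⟩ <;> rw [hsum.tsum_eq]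
  · nlinarith [hlow f]
  · nlinarith [hup f]

lemma Orthonormal.isRieszSeq_of_tail_eq {v : ℕ → E} (hv : Orthonormal ℂ v)
    (hu : ∀ j, N ≤ j → u j = v j) (hperp : ∀ j < N, ∀ k, N ≤ k → ⟪u j, v k⟫ = 0)
    (hA : 0 < A) (hA1 : A ≤ 1) (hB1 : 1 ≤ B)
    (hlow : ∀ c : ℕ → ℂ, A * ∑ j ∈ range N, ‖c j‖ ^ 2 ≤ ‖∑ j ∈ range N, c j • u j‖ ^ 2)
    (hup : ∀ c : ℕ → ℂ, ‖∑ j ∈ range N, c j • u j‖ ^ 2 ≤ B * ∑ j ∈ range N, ‖c j‖ ^ 2) :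
    IsRieszSeq u A B := by
  refine ⟨hA, hA1.trans hB1, fun s c => ?_⟩
  set d : ℕ → ℂ := fun j => if j ∈ s then c j else 0
  set x := ∑ j ∈ range N, d j • u j
  set y := ∑ j ∈ s with N ≤ j, c j • v j
  have hxy : ∑ j ∈ s, c j • u j = x + y := by
    rw [sum_eq_sum_range_ite_add_sum_filter_le s N]
    congr 1
    · exact sum_congr rfl fun j _ => by simp only [d, ite_smul, zero_smul]
    · exact sum_congr rfl fun j hj => by rw [hu j (mem_filter.1 hj).2]
  have hxy_orth : ⟪x, y⟫ = 0 := by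
    simp only [x, y, sum_inner, inner_sum, inner_smul_left, inner_smul_right]
    refine sum_eq_zero fun k hk => mul_eq_zero_of_right _ (sum_eq_zero fun j hj => ?_)
    rw [hperp j (mem_range.1 hj) k (mem_filter.1 hk).2, mul_zero]
  have hnorm : ‖x + y‖ ^ 2 = ‖x‖ ^ 2 + ∑ j ∈ s with N ≤ j, ‖c j‖ ^ 2 := by
    rw [sq, norm_add_sq_eq_norm_sq_add_norm_sq_of_inner_eq_zero x y hxy_orth, ← sq, ← sq,
      hv.norm_sq_sum_smul]
  have hcoeff : ∑ j ∈ s, ‖c j‖ ^ 2 = ∑ j ∈ range N, ‖d j‖ ^ 2 + ∑ j ∈ s with N ≤ j, ‖c j‖ ^ 2 := by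
    rw [sum_eq_sum_range_ite_add_sum_filter_le s N]
    congr 1
    exact sum_congr rfl fun j _ => by simp only [d]; split_ifs <;> simp
  have htail : 0 ≤ ∑ j ∈ s with N ≤ j, ‖c j‖ ^ 2 := sum_nonneg fun _ _ => by positivity
  rw [hxy, hnorm, hcoeff]
  constructor
  · nlinarith [hlow d]
  · nlinarith [hup d]

lemma IsRieszSeq.norm_sq_le (h : IsRieszSeq u A B) (j : ℕ) : ‖u j‖ ^ 2 ≤ B := by
  simpa using (h.2.2 {j} fun _ => 1).2

lemma OptimalRieszConstants.unique {A' B' : ℝ} (h : OptimalRieszConstants u A B)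
    (h' : OptimalRieszConstants u A' B') : A = A' ∧ B = B' := by
  obtain ⟨hA, hB⟩ := h.2 A' B' h'.1
  obtain ⟨hA', hB'⟩ := h'.2 A B h.1
  exact ⟨le_antisymm hA' hA, le_antisymm hB hB'⟩

end Frames

section BtN

variable {E : Type*} [NormedAddCommGroup E] [InnerProductSpace ℂ E] {v w : ℕ → E} {N : ℕ}

lemma BtNseq_of_lt {j : ℕ} (hj : j < N) : BtNseq w v N j = pproj v N (w j) := if_pos hj

lemma BtNseq_of_le {j : ℕ} (hj : N ≤ j) : BtNseq w v N j = v j := if_neg (not_lt.2 hj)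

lemma pproj_eq_sum_fin (u : E) : pproj v N u = ∑ k : Fin N, ⟪v k, u⟫ • v k :=
  sum_range _

lemma inner_pproj_of_le (hv : Orthonormal ℂ v) (u : E) {k : ℕ} (hk : N ≤ k) :
    ⟪pproj v N u, v k⟫ = 0 := by
  refine (sum_inner _ _ _).trans (sum_eq_zero fun j hj => ?_)
  rw [inner_smul_left, hv.2 ((mem_range.1 hj).trans_le hk).ne, mul_zero]

lemma norm_sq_pproj_le (hv : Orthonormal ℂ v) (u : E) : ‖pproj v N u‖ ^ 2 ≤ ‖u‖ ^ 2 := by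
  rw [pproj, hv.norm_sq_sum_smul]
  exact hv.sum_inner_products_le u

lemma inner_pproj_eq_mulVec (f : E) (j : Fin N) :
    ⟪f, pproj v N (w j)⟫ = (Mmat v w N *ᵥ fun k => ⟪f, v k⟫) j := by
  simp only [pproj_eq_sum_fin, inner_sum, inner_smul_right, mulVec, dotProduct, Mmat, of_apply]

lemma sum_smul_pproj_eq_sum_transpose_mulVec_smul (d : Fin N → ℂ) :
    ∑ j, d j • pproj v N (w j) = ∑ k, ((Mmat v w N)ᵀ *ᵥ d) k • v k := by
  simp only [pproj_eq_sum_fin, smul_sum, smul_smul, mulVec, dotProduct, transpose_apply, Mmat,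
    of_apply, sum_smul]
  rw [sum_comm]
  simp only [mul_comm]

lemma isUnit_Mmat (hli : LinearIndependent ℂ fun j : Fin N => pproj v N (w j)) :
    IsUnit (Mmat v w N) := by
  have hrows : Fintype.linearCombination ℂ (fun k : Fin N => v k) ∘ (Mmat v w N).row =
      fun j : Fin N => pproj v N (w j) := by
    ext j
    simp [Fintype.linearCombination_apply, pproj_eq_sum_fin, Mmat]
  exact linearIndependent_rows_iff_isUnit.1 (LinearIndependent.of_comp _ (hrows ▸ hli))

lemma sum_range_norm_sq_inner_BtNseq (f : E) :
    ∑ j ∈ range N, ‖⟪f, BtNseq w v N j⟫‖ ^ 2 =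
      ∑ j, ‖(Mmat v w N *ᵥ fun k => ⟪f, v k⟫) j‖ ^ 2 := by
  rw [sum_range]
  exact sum_congr rfl fun j _ => by rw [BtNseq_of_lt j.2, inner_pproj_eq_mulVec]

lemma norm_sq_sum_range_smul_BtNseq (hv : Orthonormal ℂ v) (c : ℕ → ℂ) :
    ‖∑ j ∈ range N, c j • BtNseq w v N j‖ ^ 2 =
      ∑ k, ‖((Mmat v w N)ᵀ *ᵥ fun j : Fin N => c j) k‖ ^ 2 := by
  have hv' : Orthonormal ℂ fun k : Fin N => v k := hv.comp _ Fin.val_injective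
  rw [sum_range, ← hv'.norm_sq_sum_smul, ← sum_smul_pproj_eq_sum_transpose_mulVec_smul]
  exact congrArg (‖·‖ ^ 2) (sum_congr rfl fun j _ => by rw [BtNseq_of_lt j.2])

variable [NeZero N]

theorem HilbertBasis.isRieszBasis_BtNseq (b : HilbertBasis ℕ ℂ E) (hw : ‖w 0‖ ≤ 1)
    (hM : IsUnit (Mmat b w N)) :
    IsRieszBasis (BtNseq w b N) (‖(Mmat b w N)⁻¹‖ ^ 2)⁻¹ (max 1 (‖Mmat b w N‖ ^ 2)) := by
  set M := Mmat b w N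
  have hlow (c : ℕ → ℂ) :
      (‖M⁻¹‖ ^ 2)⁻¹ * ∑ j ∈ range N, ‖c j‖ ^ 2 ≤ ‖∑ j ∈ range N, c j • BtNseq w b N j‖ ^ 2 := by
    rw [norm_sq_sum_range_smul_BtNseq b.orthonormal, sum_range]
    exact inv_norm_inv_sq_mul_le_sum_norm_sq_transpose_mulVec hM _
  have hA : 0 < (‖M⁻¹‖ ^ 2)⁻¹ := by
    have := norm_pos_iff.2 (isUnit_nonsing_inv_iff.2 hM).ne_zero
    positivity
  have hA1 : (‖M⁻¹‖ ^ 2)⁻¹ ≤ 1 := by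
    have h0 : 0 ∈ range N := mem_range.2 (NeZero.pos N)
    have h := hlow (Pi.single 0 1)
    rw [sum_eq_single_of_mem 0 h0 fun j _ hj => by simp [hj],
      sum_eq_single_of_mem 0 h0 fun j _ hj => by simp [hj]] at h
    simp only [Pi.single_eq_same, norm_one, one_pow, mul_one, one_smul,
      BtNseq_of_lt (NeZero.pos N)] at h
    exact h.trans ((norm_sq_pproj_le b.orthonormal _).trans (pow_le_one₀ (norm_nonneg _) hw))
  have hB1 : 1 ≤ max 1 (‖M‖ ^ 2) := le_max_left _ _
  have hMB : ‖M‖ ^ 2 ≤ max 1 (‖M‖ ^ 2) := le_max_right _ _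
  have hu (j : ℕ) (hj : N ≤ j) : BtNseq w b N j = b j := BtNseq_of_le hj
  refine ⟨b.isFrame_of_tail_eq hu hA hA1 hB1 (fun f => ?_) (fun f => ?_),
    b.orthonormal.isRieszSeq_of_tail_eq hu (fun j hj k hk => ?_) hA hA1 hB1 hlow (fun c => ?_)⟩
  · rw [sum_range_norm_sq_inner_BtNseq, sum_range]
    exact inv_norm_inv_sq_mul_le_sum_norm_sq_mulVec hM _
  · rw [sum_range_norm_sq_inner_BtNseq, sum_range]
    exact (sum_norm_sq_mulVec_le M _).trans (by gcongr)
  · rw [BtNseq_of_lt hj]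
    exact inner_pproj_of_le b.orthonormal _ hk
  · rw [norm_sq_sum_range_smul_BtNseq b.orthonormal, sum_range]
    exact (sum_norm_sq_transpose_mulVec_le M _).trans (by gcongr)

theorem HilbertBasis.le_of_isRieszSeq_BtNseq (b : HilbertBasis ℕ ℂ E) (hM : IsUnit (Mmat b w N))
    {A B : ℝ} (h : IsRieszSeq (BtNseq w b N) A B) :
    A ≤ (‖(Mmat b w N)⁻¹‖ ^ 2)⁻¹ ∧ max 1 (‖Mmat b w N‖ ^ 2) ≤ B := by
  have key (d : Fin N → ℂ) (hd : ∑ j, ‖d j‖ ^ 2 = 1) :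
      A ≤ ∑ k, ‖((Mmat b w N)ᵀ *ᵥ d) k‖ ^ 2 ∧ ∑ k, ‖((Mmat b w N)ᵀ *ᵥ d) k‖ ^ 2 ≤ B := by
    let c : ℕ → ℂ := fun j => if hj : j < N then d ⟨j, hj⟩ else 0
    have hcd (j : Fin N) : c j = d j := dif_pos j.2
    have hc := h.2.2 (range N) c
    rw [norm_sq_sum_range_smul_BtNseq b.orthonormal] at hc
    simpa only [sum_range, hcd, hd, mul_one] using hc
  obtain ⟨d, hd, hdA⟩ := (isLeast_sqNormValues_transpose hM).1
  obtain ⟨d', hd', hdB⟩ := (isGreatest_sqNormValues_transpose (Mmat b w N)).1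
  refine ⟨hdA ▸ (key d hd).1, max_le ?_ (hdB ▸ (key d' hd').2)⟩
  simpa [BtNseq_of_le le_rfl, b.orthonormal.norm_eq_one] using h.norm_sq_le N

end BtN

theorem statement10 (v w : ℕ → H) (hv : Orthonormal ℂ v)
    (hv_top : (span ℂ (Set.range v)).topologicalClosure = ⊤)
    (hw : ∀ j, ‖w j‖ = 1)
    (N : ℕ) (hN : 1 ≤ N)
    (hbasis : LinearIndependent ℂ (fun j : Fin N => pproj v N (w (j : ℕ))) ∧
      span ℂ ((fun j => pproj v N (w j)) '' Set.Iio N) = span ℂ (v '' Set.Iio N)) :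
    (∃ A B : ℝ, OptimalRieszConstants (BtNseq w v N) A B) ∧
    ∀ A B : ℝ, OptimalRieszConstants (BtNseq w v N) A B →
      IsLeast {x : ℝ | ∃ c : Fin N → ℂ, (∑ i, ‖c i‖ ^ 2) = 1 ∧
          x = ∑ i, ‖(Mmat v w N).mulVec c i‖ ^ 2} A ∧
      ∃ m : ℝ, IsGreatest {x : ℝ | ∃ c : Fin N → ℂ, (∑ i, ‖c i‖ ^ 2) = 1 ∧
          x = ∑ i, ‖(Mmat v w N).mulVec c i‖ ^ 2} m ∧ B = max 1 m := by
  obtain ⟨b, rfl⟩ : ∃ b : HilbertBasis ℕ ℂ H, ⇑b = v := ⟨_, HilbertBasis.coe_mk hv hv_top.ge⟩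
  have : NeZero N := ⟨by omega⟩
  have hM := isUnit_Mmat hbasis.1
  have hopt : OptimalRieszConstants (BtNseq w b N)
      (‖(Mmat b w N)⁻¹‖ ^ 2)⁻¹ (max 1 (‖Mmat b w N‖ ^ 2)) :=
    ⟨b.isRieszBasis_BtNseq (hw 0).le hM, fun _ _ h => b.le_of_isRieszSeq_BtNseq hM h.2⟩
  refine ⟨⟨_, _, hopt⟩, fun A B h => ?_⟩
  obtain ⟨rfl, rfl⟩ := hopt.unique h
  exact ⟨isLeast_sqNormValues hM, _, isGreatest_sqNormValues _, rfl⟩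

end
end
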